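/- arXiv:1401.6833 — 8 statements merged into one kernel-verified Lean document; each statement's English description precedes it below -/
import Mathlib

section
/- Let 0 < l1 < l2 < L be real numbers. Then there exist a function ψ ∈ C³([0,L]) and a point l3 ∈ (l1,l2) such that: (C1) ψ(x) > 0 for all x ∈ [0,L]; (C2) for all x ∈ [0,L] \ (l1,l2) one has ψ'(x) ≠ 0, ψ''(x) < 0 and ψ'(x)·ψ'''(x) < 0; (C3) ψ'(0) < 0 and ψ'(L) > 0; (C4) ψ(l3) = min_{x∈[l1,l2]} ψ(x) < max_{x∈[l1,l2]} ψ(x) = ψ(l1) = ψ(l2), and max_{x∈[0,L]} ψ(x) = ψ(0) = ψ(L); (C5) ψ(0) < (4/3)·ψ(l3). -/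
/-!
Build `g = ψ'` first. Near `[0, l1]` it is `-(2 - e^{-x})` and near `[l2, L]` it is
`κ (2 - e^{x - L})`: both pieces are decreasing with `g g'' < 0`, which is (C2). Smooth cutoffs
take both pieces to zero at the midpoint `m` of `[l1, l2]`, so `g < 0` on `[0, m)` and `g > 0`
on `(m, L]`; hence `ψ = C + ∫₀ˣ g` decreases up to `m` and increases after it. The equalities
`ψ l1 = ψ l2` and `ψ 0 = ψ L` mean `∫_{l1}^{l2} g = 0` and `∫₀ᴸ g = 0`; they are met by choosing
the scale `κ` and the weights of two nonnegative bumps added inside the transition zones.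
(C1) and (C5) are the only conditions that change when a constant is added to `ψ`, and a large
enough `C` gives both.
-/

open Real Set Filter Topology intervalIntegral

noncomputable section

def cutoff (a m x : ℝ) : ℝ := smoothTransition ((m - x) / (m - a))

def bump (a m x : ℝ) : ℝ := cutoff a m x * (1 - cutoff a m x)

def edge (y : ℝ) : ℝ := 2 - exp (-y)

def sideSlope (a m ν x : ℝ) : ℝ := edge x * (cutoff a m x + ν * bump a m x)

def weightSlope (L a m b κ νL νR x : ℝ) : ℝ :=
  -sideSlope a m νL x + κ * sideSlope (L - b) (L - m) νR (L - x)

def OuterSlopeCondition (g : ℝ → ℝ) (x : ℝ) : Prop :=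
  deriv g x < 0 ∧ g x * deriv (deriv g) x < 0

structure IsWeightSlope (L l1 l2 m : ℝ) (g : ℝ → ℝ) : Prop where
  contDiff : ContDiff ℝ 2 g
  neg : ∀ x ∈ Ico 0 m, g x < 0
  pos : ∀ x ∈ Ioc m L, 0 < g x
  integral_mid : ∫ x in l1..l2, g x = 0
  integral_total : ∫ x in 0..L, g x = 0
  outer : ∀ x ∈ Icc 0 L, x ∉ Ioo l1 l2 → OuterSlopeCondition g x

section Cutoff

variable {a m x : ℝ}

theorem contDiff_cutoff {n : ℕ∞} : ContDiff ℝ n (cutoff a m) :=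
  smoothTransition.contDiff.comp (by fun_prop)

theorem continuous_cutoff : Continuous (cutoff a m) := contDiff_cutoff.continuous (n := 0)

theorem continuous_bump : Continuous (bump a m) :=
  continuous_cutoff.mul (continuous_const.sub continuous_cutoff)

theorem cutoff_of_le (ham : a < m) (hx : x ≤ a) : cutoff a m x = 1 :=
  smoothTransition.one_of_one_le <| (one_le_div (by linarith)).2 (by linarith)

theorem cutoff_of_ge (ham : a < m) (hx : m ≤ x) : cutoff a m x = 0 :=
  smoothTransition.zero_of_nonpos <| div_nonpos_of_nonpos_of_nonneg (by linarith) (by linarith)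

theorem cutoff_pos (ham : a < m) (hx : x < m) : 0 < cutoff a m x :=
  smoothTransition.pos_of_pos <| div_pos (by linarith) (by linarith)

theorem cutoff_lt_one (ham : a < m) (hx : a < x) : cutoff a m x < 1 :=
  smoothTransition.lt_one_of_lt_one <| (div_lt_one (by linarith)).2 (by linarith)

theorem bump_nonneg : 0 ≤ bump a m x :=
  mul_nonneg (smoothTransition.nonneg _) (sub_nonneg.2 (smoothTransition.le_one _))

theorem bump_pos (ham : a < m) (hx : x ∈ Ioo a m) : 0 < bump a m x :=
  mul_pos (cutoff_pos ham hx.2) (sub_pos.2 (cutoff_lt_one ham hx.1))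

end Cutoff

section Edge

theorem one_le_edge {y : ℝ} (hy : 0 ≤ y) : 1 ≤ edge y := by
  have : exp (-y) ≤ 1 := exp_le_one_iff.2 (by linarith)
  unfold edge
  linarith

theorem contDiff_edge {n : ℕ∞} : ContDiff ℝ n edge := by
  unfold edge
  fun_prop

theorem continuous_edge : Continuous edge := contDiff_edge.continuous (n := 0)

theorem hasDerivAt_exp_neg_affine (s t y : ℝ) :
    HasDerivAt (fun y => exp (-(s * y + t))) (-s * exp (-(s * y + t))) y := by
  have h : HasDerivAt (fun y => s * y + t) s y := by
    simpa using ((hasDerivAt_id y).const_mul s).add_const t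
  simpa [mul_comm] using h.neg.exp

theorem deriv_edge_affine (c s t : ℝ) :
    deriv (fun y => c * edge (s * y + t)) = fun y => c * s * exp (-(s * y + t)) := by
  funext y
  have h := ((hasDerivAt_exp_neg_affine s t y).const_sub 2).const_mul c
  rw [show (fun y => c * edge (s * y + t)) = fun y => c * (2 - exp (-(s * y + t))) from rfl,
    h.deriv]
  ring

theorem deriv_deriv_edge_affine (c s t : ℝ) :
    deriv (deriv fun y => c * edge (s * y + t)) = fun y => -(c * s * s * exp (-(s * y + t))) := by
  funext y
  rw [deriv_edge_affine, ((hasDerivAt_exp_neg_affine s t y).const_mul (c * s)).deriv]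
  ring

theorem outerSlopeCondition_edge_affine {c s t x : ℝ} (hcs : c * s < 0) (hx : 0 ≤ s * x + t) :
    OuterSlopeCondition (fun y => c * edge (s * y + t)) x := by
  have hexp := exp_pos (-(s * x + t))
  have hedge := one_le_edge hx
  refine ⟨?_, ?_⟩
  · rw [deriv_edge_affine]
    exact mul_neg_of_neg_of_pos hcs hexp
  · rw [deriv_deriv_edge_affine,
      show c * edge (s * x + t) * -(c * s * s * exp (-(s * x + t))) =
        -((c * s) ^ 2 * edge (s * x + t) * exp (-(s * x + t))) by ring]
    have := sq_pos_of_neg hcs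
    exact neg_neg_of_pos (by positivity)

end Edge

theorem OuterSlopeCondition.congr {g h : ℝ → ℝ} {x : ℝ} (H : OuterSlopeCondition h x)
    (hgh : g =ᶠ[𝓝 x] h) : OuterSlopeCondition g x := by
  rwa [OuterSlopeCondition, hgh.deriv_eq, hgh.eq_of_nhds, hgh.deriv.deriv_eq]

section SideSlope

variable {a m ν x l e T : ℝ}

theorem contDiff_sideSlope {n : ℕ∞} : ContDiff ℝ n (sideSlope a m ν) := by
  unfold sideSlope bump
  have := contDiff_cutoff (n := n) (a := a) (m := m)
  have := contDiff_edge (n := n)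
  fun_prop

theorem continuous_sideSlope : Continuous (sideSlope a m ν) :=
  contDiff_sideSlope.continuous (n := 0)

theorem sideSlope_of_le (ham : a < m) (hx : x ≤ a) : sideSlope a m ν x = edge x := by
  simp [sideSlope, bump, cutoff_of_le ham hx]

theorem sideSlope_of_ge (ham : a < m) (hx : m ≤ x) : sideSlope a m ν x = 0 := by
  simp [sideSlope, bump, cutoff_of_ge ham hx]

theorem sideSlope_pos (ham : a < m) (hν : 0 ≤ ν) (hx : x ∈ Ico 0 m) : 0 < sideSlope a m ν x :=
  mul_pos (by linarith [one_le_edge hx.1])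
    (add_pos_of_pos_of_nonneg (cutoff_pos ham hx.2) (mul_nonneg hν bump_nonneg))

theorem integral_sideSlope :
    ∫ x in l..e, sideSlope a m ν x =
      (∫ x in l..e, edge x * cutoff a m x) + ν * ∫ x in l..e, edge x * bump a m x := by
  have h1 : Continuous fun x => edge x * cutoff a m x := continuous_edge.mul continuous_cutoff
  have h2 : Continuous fun x => ν * (edge x * bump a m x) :=
    (continuous_edge.mul continuous_bump).const_mul ν
  simp only [sideSlope, mul_add, mul_left_comm _ ν]
  rw [integral_add (h1.intervalIntegrable _ _) (h2.intervalIntegrable _ _), integral_const_mul]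

theorem integral_sideSlope_eq_integral_edge_add (ham : a < m) (hl : 0 ≤ l) (hla : l ≤ a) (hme : m ≤ e)
    (heT : e ≤ T) :
    ∫ x in 0..T, sideSlope a m ν x = (∫ x in 0..l, edge x) + ∫ x in l..e, sideSlope a m ν x := by
  have hint : ∀ p q, IntervalIntegrable (sideSlope a m ν) MeasureTheory.volume p q :=
    fun p q => continuous_sideSlope.intervalIntegrable p q
  have hleft : ∫ x in 0..l, sideSlope a m ν x = ∫ x in 0..l, edge x :=
    integral_congr fun x hx => sideSlope_of_le ham <| by
      rw [uIcc_of_le hl] at hx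
      linarith [hx.2]
  have hright : ∫ x in e..T, sideSlope a m ν x = 0 := by
    rw [integral_congr (g := fun _ => (0 : ℝ)), integral_zero]
    intro x hx
    rw [uIcc_of_le heT] at hx
    exact sideSlope_of_ge ham (by linarith [hx.1])
  rw [← integral_add_adjacent_intervals (hint 0 e) (hint e T),
    ← integral_add_adjacent_intervals (hint 0 l) (hint l e), hleft, hright, add_zero]

theorem integral_edge_pos (hl : 0 < l) : 0 < ∫ x in 0..l, edge x :=
  intervalIntegral_pos_of_pos_on (continuous_edge.intervalIntegrable _ _)
    (fun x hx => by linarith [one_le_edge hx.1.le]) hl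

theorem integral_edge_mul_cutoff_nonneg (hl : 0 ≤ l) (hle : l ≤ e) :
    0 ≤ ∫ x in l..e, edge x * cutoff a m x :=
  integral_nonneg hle fun x hx =>
    mul_nonneg (by linarith [one_le_edge (hl.trans hx.1)]) (smoothTransition.nonneg _)

theorem integral_edge_mul_bump_pos (ham : a < m) (hl : 0 ≤ l) (hla : l ≤ a) (hme : m ≤ e) :
    0 < ∫ x in l..e, edge x * bump a m x := by
  have hcont : Continuous fun x => edge x * bump a m x := continuous_edge.mul continuous_bump
  calc 0 < ∫ x in a..m, edge x * bump a m x :=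
        intervalIntegral_pos_of_pos_on (hcont.intervalIntegrable _ _)
          (fun x hx => mul_pos (by linarith [one_le_edge (by linarith [hx.1] : (0 : ℝ) ≤ x)])
            (bump_pos ham hx)) ham
    _ ≤ ∫ x in l..e, edge x * bump a m x :=
        integral_mono_interval hla ham.le hme
          ((MeasureTheory.ae_restrict_iff' measurableSet_Ioc).2 <|
            Eventually.of_forall fun x hx =>
              mul_nonneg (by linarith [one_le_edge (by linarith [hx.1] : (0 : ℝ) ≤ x)])
                bump_nonneg)
          (hcont.intervalIntegrable _ _)

end SideSlope

section WeightSlope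

variable {L a m b κ νL νR x : ℝ}

theorem contDiff_weightSlope {n : ℕ∞} : ContDiff ℝ n (weightSlope L a m b κ νL νR) :=
  contDiff_sideSlope.neg.add
    (contDiff_const.mul (contDiff_sideSlope.comp (contDiff_const.sub contDiff_id)))

theorem weightSlope_neg (ham : a < m) (hmb : m < b) (hνL : 0 ≤ νL) (hx : x ∈ Ico 0 m) :
    weightSlope L a m b κ νL νR x < 0 := by
  rw [weightSlope, sideSlope_of_ge (x := L - x) (by linarith) (by linarith [hx.2])]
  linarith [sideSlope_pos ham hνL hx]

theorem weightSlope_pos (ham : a < m) (hmb : m < b) (hκ : 0 < κ) (hνR : 0 ≤ νR)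
    (hx : x ∈ Ioc m L) : 0 < weightSlope L a m b κ νL νR x := by
  rw [weightSlope, sideSlope_of_ge ham hx.1.le, neg_zero, zero_add]
  have := sideSlope_pos (a := L - b) (m := L - m) (by linarith) hνR
    (x := L - x) ⟨by linarith [hx.2], by linarith [hx.1]⟩
  positivity

theorem weightSlope_eventuallyEq_left (ham : a < m) (hmb : m < b) (hx : x < a) :
    weightSlope L a m b κ νL νR =ᶠ[𝓝 x] fun y => -1 * edge (1 * y + 0) := by
  filter_upwards [Iio_mem_nhds hx] with y hy
  rw [weightSlope, sideSlope_of_le ham (le_of_lt hy),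
    sideSlope_of_ge (x := L - y) (by linarith) (by linarith [mem_Iio.1 hy])]
  simp

theorem weightSlope_eventuallyEq_right (ham : a < m) (hmb : m < b) (hx : b < x) :
    weightSlope L a m b κ νL νR =ᶠ[𝓝 x] fun y => κ * edge (-1 * y + L) := by
  filter_upwards [Ioi_mem_nhds hx] with y hy
  rw [weightSlope, sideSlope_of_ge ham (by linarith [mem_Ioi.1 hy]),
    sideSlope_of_le (by linarith) (by linarith [mem_Ioi.1 hy]), neg_zero, zero_add]
  ring_nf

theorem outerSlopeCondition_weightSlope (ham : a < m) (hmb : m < b) (hκ : 0 < κ)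
    (hx : x ∈ Icc 0 L) (hout : x < a ∨ b < x) :
    OuterSlopeCondition (weightSlope L a m b κ νL νR) x := by
  rcases hout with h | h
  · exact (outerSlopeCondition_edge_affine (by norm_num) (by linarith [hx.1])).congr
      (weightSlope_eventuallyEq_left ham hmb h)
  · exact (outerSlopeCondition_edge_affine (by linarith) (by linarith [hx.2])).congr
      (weightSlope_eventuallyEq_right ham hmb h)

theorem integral_weightSlope (p q : ℝ) :
    ∫ x in p..q, weightSlope L a m b κ νL νR x =
      -(∫ x in p..q, sideSlope a m νL x) +
        κ * ∫ x in L - q..L - p, sideSlope (L - b) (L - m) νR x := by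
  have hR : Continuous fun x => κ * sideSlope (L - b) (L - m) νR (L - x) :=
    continuous_const.mul (continuous_sideSlope.comp (continuous_const.sub continuous_id))
  simp only [weightSlope]
  have hL : Continuous fun x => -sideSlope a m νL x := continuous_sideSlope.neg
  rw [integral_add (hL.intervalIntegrable _ _) (hR.intervalIntegrable _ _), integral_neg, integral_const_mul,
    integral_comp_sub_left (fun x => sideSlope (L - b) (L - m) νR x)]

end WeightSlope

theorem exists_isWeightSlope {L l1 l2 a m b : ℝ} (hl1 : 0 < l1) (hla : l1 < a) (ham : a < m)
    (hmb : m < b) (hbl : b < l2) (hl2 : l2 < L) : ∃ g, IsWeightSlope L l1 l2 m g := by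
  set OL := ∫ x in 0..l1, edge x
  set OR := ∫ x in 0..L - l2, edge x
  set SL := ∫ x in l1..l2, edge x * cutoff a m x
  set BL := ∫ x in l1..l2, edge x * bump a m x
  set SR := ∫ x in L - l2..L - l1, edge x * cutoff (L - b) (L - m) x
  set BR := ∫ x in L - l2..L - l1, edge x * bump (L - b) (L - m) x
  have hOL : 0 < OL := integral_edge_pos hl1
  have hOR : 0 < OR := integral_edge_pos (by linarith)
  have hSL : 0 ≤ SL := integral_edge_mul_cutoff_nonneg hl1.le (by linarith)
  have hSR : 0 ≤ SR := integral_edge_mul_cutoff_nonneg (by linarith) (by linarith)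
  have hBL : 0 < BL := integral_edge_mul_bump_pos ham hl1.le hla.le (by linarith)
  have hBR : 0 < BR :=
    integral_edge_mul_bump_pos (by linarith) (by linarith) (by linarith) (by linarith)
  -- `κ` balances the masses outside `[l1, l2]`; inside, each bump cancels the cutoff mass of the
  -- opposite side
  set κ := OL / OR with hκ_def
  have hκ : 0 < κ := div_pos hOL hOR
  set νL := κ * SR / BL with hνL_def
  set νR := SL / (κ * BR) with hνR_def
  have hmid : ∫ x in l1..l2, sideSlope a m νL x =
      κ * ∫ x in L - l2..L - l1, sideSlope (L - b) (L - m) νR x := by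
    rw [integral_sideSlope, integral_sideSlope]
    change SL + νL * BL = κ * (SR + νR * BR)
    rw [hνL_def, hνR_def]
    field_simp
    ring
  refine ⟨weightSlope L a m b κ νL νR, contDiff_weightSlope,
    fun x hx => weightSlope_neg ham hmb (by positivity) hx,
    fun x hx => weightSlope_pos ham hmb hκ (by positivity) hx, ?_, ?_, ?_⟩
  · rw [integral_weightSlope, hmid]
    ring
  · rw [integral_weightSlope, sub_self, sub_zero,
      integral_sideSlope_eq_integral_edge_add ham hl1.le hla.le (by linarith) hl2.le,
      integral_sideSlope_eq_integral_edge_add (l := L - l2) (e := L - l1) (by linarith) (by linarith)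
        (by linarith) (by linarith) (by linarith), hmid]
    change -(OL + _) + κ * (OR + _) = 0
    rw [hκ_def]
    field_simp
    ring
  · intro x hx hout
    refine outerSlopeCondition_weightSlope ham hmb hκ hx ?_
    by_contra! h
    exact hout ⟨by linarith [h.1], by linarith [h.2]⟩

section Valley

variable {f : ℝ → ℝ} {p m q x : ℝ}

theorem le_of_valley (hanti : AntitoneOn f (Icc p m)) (hmono : MonotoneOn f (Icc m q))
    (hx : x ∈ Icc p q) : f m ≤ f x := by
  rcases le_total x m with h | h
  · exact hanti ⟨hx.1, h⟩ ⟨hx.1.trans h, le_rfl⟩ h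
  · exact hmono ⟨le_rfl, h.trans hx.2⟩ ⟨h, hx.2⟩ h

theorem le_left_of_valley {a b : ℝ} (hanti : AntitoneOn f (Icc p m))
    (hmono : MonotoneOn f (Icc m q)) (hpa : p ≤ a) (hbq : b ≤ q) (hab : f a = f b)
    (hx : x ∈ Icc a b) : f x ≤ f a := by
  rcases le_total x m with h | h
  · exact hanti ⟨hpa, hx.1.trans h⟩ ⟨hpa.trans hx.1, h⟩ hx.1
  · exact hab ▸ hmono ⟨h, hx.2.trans hbq⟩ ⟨h.trans hx.2, hbq⟩ hx.2

end Valley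

theorem hasDerivAt_const_add_primitive {g : ℝ → ℝ} (hg : Continuous g) (C x : ℝ) :
    HasDerivAt (fun x => C + ∫ t in 0..x, g t) (g x) x :=
  ((hg.integral_hasStrictDerivAt 0 x).hasDerivAt).const_add C

theorem IsWeightSlope.exists_weight {L l1 l2 m : ℝ} {g : ℝ → ℝ}
    (hg : IsWeightSlope L l1 l2 m g) (hl1 : 0 ≤ l1) (hm : m ∈ Ioo l1 l2) (hl2 : l2 ≤ L) :
    ∃ (ψ : ℝ → ℝ) (l3 : ℝ), ContDiff ℝ 3 ψ ∧ l3 ∈ Set.Ioo l1 l2 ∧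
      (∀ x ∈ Set.Icc (0:ℝ) L, 0 < ψ x) ∧
      (∀ x ∈ Set.Icc (0:ℝ) L, x ∉ Set.Ioo l1 l2 →
        deriv ψ x ≠ 0 ∧ deriv (deriv ψ) x < 0 ∧
          deriv ψ x * deriv (deriv (deriv ψ)) x < 0) ∧
      deriv ψ 0 < 0 ∧ 0 < deriv ψ L ∧
      (∀ x ∈ Set.Icc l1 l2, ψ l3 ≤ ψ x) ∧
      (∀ x ∈ Set.Icc l1 l2, ψ x ≤ ψ l1) ∧
      ψ l3 < ψ l1 ∧ ψ l1 = ψ l2 ∧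
      (∀ x ∈ Set.Icc (0:ℝ) L, ψ x ≤ ψ 0) ∧ ψ 0 = ψ L ∧
      ψ 0 < (4 / 3) * ψ l3 := by
  have hcont : Continuous g := hg.contDiff.continuous
  have hint : ∀ x y, IntervalIntegrable g MeasureTheory.volume x y :=
    fun x y => hcont.intervalIntegrable x y
  -- this constant makes `ψ 0 = 4 (ψ 0 - ψ m) + 1`, which gives (C1) and (C5)
  set C := 1 - 4 * ∫ t in 0..m, g t
  set ψ := fun x => C + ∫ t in 0..x, g t with hψ
  have hψ' : ∀ x, HasDerivAt ψ (g x) x := hasDerivAt_const_add_primitive hcont C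
  have hderiv : deriv ψ = g := funext fun x => (hψ' x).deriv
  have hdiff : ∀ x y, ψ y - ψ x = ∫ t in x..y, g t := fun x y => by
    simp only [hψ, add_sub_add_left_eq_sub, integral_interval_sub_left (hint 0 y) (hint 0 x)]
  have hanti : StrictAntiOn ψ (Icc 0 m) :=
    strictAntiOn_of_deriv_neg (convex_Icc 0 m)
      (fun x _ => (hψ' x).continuousAt.continuousWithinAt)
      (fun x hx => by rw [interior_Icc] at hx; rw [hderiv]; exact hg.neg x ⟨hx.1.le, hx.2⟩)
  have hmono : StrictMonoOn ψ (Icc m L) :=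
    strictMonoOn_of_deriv_pos (convex_Icc m L)
      (fun x _ => (hψ' x).continuousAt.continuousWithinAt)
      (fun x hx => by rw [interior_Icc] at hx; rw [hderiv]; exact hg.pos x ⟨hx.1, hx.2.le⟩)
  have hmin : ∀ x ∈ Icc 0 L, ψ m ≤ ψ x := fun x hx =>
    le_of_valley hanti.antitoneOn hmono.monotoneOn hx
  have hl1l2 : ψ l1 = ψ l2 := by linarith [hdiff l1 l2, hg.integral_mid]
  have h0L : ψ 0 = ψ L := by linarith [hdiff 0 L, hg.integral_total]
  have hm0 : ψ m < ψ 0 := hanti ⟨le_rfl, by linarith [hm.1]⟩ ⟨by linarith [hm.1], le_rfl⟩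
    (by linarith [hm.1])
  have hψ0 : ψ 0 = 1 - 4 * ∫ t in 0..m, g t := by simp [hψ, C]
  have hψm : ψ m = 1 - 3 * ∫ t in 0..m, g t := by simp only [hψ, C]; ring
  refine ⟨ψ, m, ?_, hm, fun x hx => ?_, fun x hx hout => ?_, ?_, ?_, fun x hx => ?_,
    fun x hx => ?_, ?_, hl1l2, fun x hx => ?_, h0L, ?_⟩
  · rw [show (3 : WithTop ℕ∞) = 2 + 1 from rfl, contDiff_succ_iff_deriv, hderiv]
    exact ⟨fun x => (hψ' x).differentiableAt, by simp, hg.contDiff⟩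
  · linarith [hmin x hx]
  · rw [hderiv]
    obtain ⟨hconc, hprod⟩ := hg.outer x hx hout
    refine ⟨?_, hconc, hprod⟩
    rcases lt_or_gt_of_ne (fun h : x = m => hout (h ▸ hm)) with h | h
    · exact (hg.neg x ⟨hx.1, h⟩).ne
    · exact (hg.pos x ⟨h, hx.2⟩).ne'
  · rw [hderiv]
    exact hg.neg 0 ⟨le_rfl, by linarith [hm.1]⟩
  · rw [hderiv]
    exact hg.pos L ⟨by linarith [hm.2], le_rfl⟩
  · exact hmin x ⟨by linarith [hx.1], by linarith [hx.2]⟩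
  · exact le_left_of_valley hanti.antitoneOn hmono.monotoneOn hl1 hl2 hl1l2 hx
  · exact hanti ⟨hl1, hm.1.le⟩ ⟨by linarith [hm.1], le_rfl⟩ hm.1
  · exact le_left_of_valley hanti.antitoneOn hmono.monotoneOn le_rfl le_rfl h0L hx
  · linarith

end

/-- existence of a Carleman weight function `ψ ∈ C³([0,L])` and
`l3 ∈ (l1,l2)` satisfying conditions (C1)–(C5). -/
theorem stmt_0 (L l1 l2 : ℝ) (hl1 : 0 < l1) (hl12 : l1 < l2) (hl2 : l2 < L) :
    ∃ (ψ : ℝ → ℝ) (l3 : ℝ), ContDiff ℝ 3 ψ ∧ l3 ∈ Set.Ioo l1 l2 ∧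
      -- (C1)
      (∀ x ∈ Set.Icc (0:ℝ) L, 0 < ψ x) ∧
      -- (C2)
      (∀ x ∈ Set.Icc (0:ℝ) L, x ∉ Set.Ioo l1 l2 →
        deriv ψ x ≠ 0 ∧ deriv (deriv ψ) x < 0 ∧
          deriv ψ x * deriv (deriv (deriv ψ)) x < 0) ∧
      -- (C3)
      deriv ψ 0 < 0 ∧ 0 < deriv ψ L ∧
      -- (C4)
      (∀ x ∈ Set.Icc l1 l2, ψ l3 ≤ ψ x) ∧
      (∀ x ∈ Set.Icc l1 l2, ψ x ≤ ψ l1) ∧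
      ψ l3 < ψ l1 ∧ ψ l1 = ψ l2 ∧
      (∀ x ∈ Set.Icc (0:ℝ) L, ψ x ≤ ψ 0) ∧ ψ 0 = ψ L ∧
      -- (C5)
      ψ 0 < (4 / 3) * ψ l3 := by
  obtain ⟨g, hg⟩ := exists_isWeightSlope (a := l1 + (l2 - l1) / 4) (m := (l1 + l2) / 2)
    (b := l2 - (l2 - l1) / 4) hl1 (by linarith) (by linarith) (by linarith) (by linarith) hl2
  exact hg.exists_weight hl1.le ⟨by linarith, by linarith⟩ hl2.le
end

section
/- Let T, L > 0, let φ ∈ C^∞([0,T]×[0,L]) and s ∈ ℝ. Let u ∈ C^∞([0,T]×[0,L]) satisfy u(t,0) = u(t,L) = u_x(t,L) = 0 for all t ∈ [0,T], and u(0,x) = u(T,x) = 0 for all x ∈ [0,L]. Set α := s(φ_t + φ_xxx) + s³φ_x³, M1u := 3s(φ_x u_xx + φ_xx u_x) + α u, and M2u := u_t + u_xxx + 3s²(φ_x² u_x + φ_x φ_xx u). Then 2∫₀^T∫₀^L (M1u)(M2u) dx dt = ∫₀^T∫₀^L [ −(α_t + α_xxx + 3s²φ_x²α_x) + 9s³((φ_x²φ_xx)_xx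 − (φ_x φ_xx²)_x) ] u² dx dt + ∫₀^T∫₀^L [ 3α_x − 27s³φ_x²φ_xx + 3s(φ_xt + φ_xxxx) ] u_x² dx dt − 9s∫₀^T∫₀^L φ_xx u_xx² dx dt + ∫₀^T [ 3s φ_x u_xx² + (9s³φ_x³ − 3sφ_xxx − α) u_x² + 6s φ_xx u_x u_xx ] evaluated from x = 0 to x = L, dt. -/
/-!
Expanding the product, `2 (M₁u)(M₂u)` equals the weighted squares of `u`, `u_x`, `u_xx` on the
right-hand side plus the divergence `∂ₜ E + ∂ₓ F` of the energy
`E = α u² - 3 s φ_x u_x²` and of an explicit flux `F`, quadratic in `(u, u_x, u_xx, u_t)`.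
Only the product rule and `∂ₓ∂ₜ u = ∂ₜ∂ₓ u` enter, so this holds for every smooth `α`.
Integrating over the rectangle, `∂ₜ E` contributes `∫ (E(T,·) - E(0,·)) = 0`, since `u` and `u_x`
vanish at `t = 0, T`, and `∂ₓ F` contributes `∫ (F(·,L) - F(·,0))`; on the lines `x = 0, L`
both `u` and `u_t` vanish, and there `F` reduces to the boundary form `B`.
-/

noncomputable def pdx (f : ℝ → ℝ → ℝ) : ℝ → ℝ → ℝ := fun t x => deriv (f t) x

noncomputable def pdt (f : ℝ → ℝ → ℝ) : ℝ → ℝ → ℝ := fun t x => deriv (fun s => f s x) t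

open Function MeasureTheory Set

def Smooth₂ (f : ℝ → ℝ → ℝ) : Prop := ContDiff ℝ (⊤ : ℕ∞) (uncurry f)

namespace Smooth₂

variable {f g : ℝ → ℝ → ℝ}

@[simp] lemma const (c : ℝ) : Smooth₂ fun _ _ => c := contDiff_const

@[simp] lemma add (hf : Smooth₂ f) (hg : Smooth₂ g) : Smooth₂ fun t x => f t x + g t x :=
  ContDiff.add hf hg

@[simp] lemma sub (hf : Smooth₂ f) (hg : Smooth₂ g) : Smooth₂ fun t x => f t x - g t x :=
  ContDiff.sub hf hg

@[simp] lemma neg (hf : Smooth₂ f) : Smooth₂ fun t x => -f t x :=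
  ContDiff.neg hf

@[simp] lemma mul (hf : Smooth₂ f) (hg : Smooth₂ g) : Smooth₂ fun t x => f t x * g t x :=
  ContDiff.mul hf hg

@[simp] lemma pow (hf : Smooth₂ f) (n : ℕ) : Smooth₂ fun t x => f t x ^ n :=
  ContDiff.pow hf n

lemma continuous (hf : Smooth₂ f) : Continuous (uncurry f) :=
  ContDiff.continuous hf

lemma hasFDerivAt (hf : Smooth₂ f) (p : ℝ × ℝ) :
    HasFDerivAt (uncurry f) (fderiv ℝ (uncurry f) p) p :=
  (ContDiff.differentiable hf (by simp) p).hasFDerivAt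

lemma differentiableAt_x (hf : Smooth₂ f) (t x : ℝ) : DifferentiableAt ℝ (f t) x :=
  (hf.hasFDerivAt (t, x)).differentiableAt.comp x
    ((differentiableAt_const t).prodMk differentiableAt_id)

lemma differentiableAt_t (hf : Smooth₂ f) (t x : ℝ) : DifferentiableAt ℝ (fun s => f s x) t :=
  show DifferentiableAt ℝ (uncurry f ∘ fun s => (s, x)) t from
    (hf.hasFDerivAt (t, x)).differentiableAt.comp t
      (differentiableAt_id.prodMk (differentiableAt_const x))

end Smooth₂

section PartialDerivatives

variable {f g : ℝ → ℝ → ℝ}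

lemma pdx_eq_fderiv (hf : Smooth₂ f) (t x : ℝ) :
    pdx f t x = fderiv ℝ (uncurry f) (t, x) (0, 1) :=
  ((hf.hasFDerivAt (t, x)).comp_hasDerivAt x
    ((hasDerivAt_const x t).prodMk (hasDerivAt_id x))).deriv

lemma pdt_eq_fderiv (hf : Smooth₂ f) (t x : ℝ) :
    pdt f t x = fderiv ℝ (uncurry f) (t, x) (1, 0) := by
  have := (hf.hasFDerivAt (t, x)).comp_hasDerivAt t
    ((hasDerivAt_id t).prodMk (hasDerivAt_const t x))
  exact this.deriv

lemma uncurry_pdx_eq_fderiv (hf : Smooth₂ f) :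
    uncurry (pdx f) = fun p => fderiv ℝ (uncurry f) p (0, 1) :=
  funext fun p => pdx_eq_fderiv hf p.1 p.2

lemma uncurry_pdt_eq_fderiv (hf : Smooth₂ f) :
    uncurry (pdt f) = fun p => fderiv ℝ (uncurry f) p (1, 0) :=
  funext fun p => pdt_eq_fderiv hf p.1 p.2

@[simp] lemma Smooth₂.pdx (hf : Smooth₂ f) : Smooth₂ (pdx f) := by
  unfold Smooth₂; rw [uncurry_pdx_eq_fderiv hf]
  exact (ContDiff.fderiv_right hf (by simp)).clm_apply contDiff_const

@[simp] lemma Smooth₂.pdt (hf : Smooth₂ f) : Smooth₂ (pdt f) := by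
  unfold Smooth₂; rw [uncurry_pdt_eq_fderiv hf]
  exact (ContDiff.fderiv_right hf (by simp)).clm_apply contDiff_const

lemma pdx_pdt_comm (hf : Smooth₂ f) : pdx (pdt f) = pdt (pdx f) := by
  have hsymm (p : ℝ × ℝ) := (ContDiff.contDiffAt hf (x := p)).isSymmSndFDerivAt
    (by rw [minSmoothness_of_isRCLikeNormedField]; exact WithTop.coe_le_coe.mpr le_top)
  have hd : Differentiable ℝ (fderiv ℝ (uncurry f)) :=
    (ContDiff.fderiv_right (m := (⊤ : ℕ∞)) hf (by exact_mod_cast le_top)).differentiable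
      (by simp)
  have key (p : ℝ × ℝ) (v w : ℝ × ℝ) : fderiv ℝ (fun q => fderiv ℝ (uncurry f) q v) p w
      = fderiv ℝ (fderiv ℝ (uncurry f)) p w v := by
    rw [fderiv_clm_apply (hd p) (differentiableAt_const v)]
    simp
  ext t x
  rw [pdx_eq_fderiv hf.pdt, pdt_eq_fderiv hf.pdx, uncurry_pdt_eq_fderiv hf,
    uncurry_pdx_eq_fderiv hf, key, key, hsymm]

@[simp] lemma pdx_const (c : ℝ) : pdx (fun _ _ => c) = fun _ _ => 0 := by
  ext t x; exact deriv_const x c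

@[simp] lemma pdx_add (hf : Smooth₂ f) (hg : Smooth₂ g) :
    pdx (fun t x => f t x + g t x) = fun t x => pdx f t x + pdx g t x := by
  ext t x; exact deriv_add (hf.differentiableAt_x t x) (hg.differentiableAt_x t x)

@[simp] lemma pdx_sub (hf : Smooth₂ f) (hg : Smooth₂ g) :
    pdx (fun t x => f t x - g t x) = fun t x => pdx f t x - pdx g t x := by
  ext t x; exact deriv_sub (hf.differentiableAt_x t x) (hg.differentiableAt_x t x)

@[simp] lemma pdx_mul (hf : Smooth₂ f) (hg : Smooth₂ g) :
    pdx (fun t x => f t x * g t x) = fun t x => pdx f t x * g t x + f t x * pdx g t x := by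
  ext t x; exact deriv_mul (hf.differentiableAt_x t x) (hg.differentiableAt_x t x)

@[simp] lemma pdx_pow (hf : Smooth₂ f) (n : ℕ) :
    pdx (fun t x => f t x ^ n) = fun t x => n * f t x ^ (n - 1) * pdx f t x := by
  ext t x; exact deriv_pow (hf.differentiableAt_x t x) n

@[simp] lemma pdt_const (c : ℝ) : pdt (fun _ _ => c) = fun _ _ => 0 := by
  ext t x; exact deriv_const t c

@[simp] lemma pdt_sub (hf : Smooth₂ f) (hg : Smooth₂ g) :
    pdt (fun t x => f t x - g t x) = fun t x => pdt f t x - pdt g t x := by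
  ext t x; exact deriv_sub (hf.differentiableAt_t t x) (hg.differentiableAt_t t x)

@[simp] lemma pdt_mul (hf : Smooth₂ f) (hg : Smooth₂ g) :
    pdt (fun t x => f t x * g t x) = fun t x => pdt f t x * g t x + f t x * pdt g t x := by
  ext t x; exact deriv_mul (hf.differentiableAt_t t x) (hg.differentiableAt_t t x)

@[simp] lemma pdt_pow (hf : Smooth₂ f) (n : ℕ) :
    pdt (fun t x => f t x ^ n) = fun t x => n * f t x ^ (n - 1) * pdt f t x := by
  ext t x; exact deriv_pow (hf.differentiableAt_t t x) n

end PartialDerivatives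

section IteratedIntegrals

variable {f g : ℝ → ℝ → ℝ}

lemma intervalIntegrable_integral_of_continuous_uncurry (hf : Continuous (uncurry f))
    (a b c d : ℝ) : IntervalIntegrable (fun t => ∫ x in c..d, f t x) volume a b :=
  (intervalIntegral.continuous_parametric_intervalIntegral_of_continuous' hf c d).intervalIntegrable
    a b

lemma integral_integral_add (hf : Continuous (uncurry f)) (hg : Continuous (uncurry g))
    (a b c d : ℝ) :
    ∫ t in a..b, ∫ x in c..d, (f t x + g t x) =
      (∫ t in a..b, ∫ x in c..d, f t x) + ∫ t in a..b, ∫ x in c..d, g t x := by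
  simp_rw [intervalIntegral.integral_add ((hf.uncurry_left _).intervalIntegrable c d)
    ((hg.uncurry_left _).intervalIntegrable c d)]
  exact intervalIntegral.integral_add (intervalIntegrable_integral_of_continuous_uncurry hf a b c d)
    (intervalIntegrable_integral_of_continuous_uncurry hg a b c d)

lemma integral_integral_sub (hf : Continuous (uncurry f)) (hg : Continuous (uncurry g))
    (a b c d : ℝ) :
    ∫ t in a..b, ∫ x in c..d, (f t x - g t x) =
      (∫ t in a..b, ∫ x in c..d, f t x) - ∫ t in a..b, ∫ x in c..d, g t x := by
  simp_rw [intervalIntegral.integral_sub ((hf.uncurry_left _).intervalIntegrable c d)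
    ((hg.uncurry_left _).intervalIntegrable c d)]
  exact intervalIntegral.integral_sub (intervalIntegrable_integral_of_continuous_uncurry hf a b c d)
    (intervalIntegrable_integral_of_continuous_uncurry hg a b c d)

theorem integral_integral_pdt_add_pdx {A C : ℝ → ℝ → ℝ} (hA : Smooth₂ A) (hC : Smooth₂ C)
    (a b c d : ℝ) :
    ∫ t in a..b, ∫ x in c..d, (pdt A t x + pdx C t x) =
      (∫ t in a..b, (C t d - C t c)) + ∫ x in c..d, (A b x - A a x) := by
  have hdiv := integral2_divergence_prod_of_hasFDerivAt_off_countable (uncurry A) (uncurry C)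
    (fderiv ℝ (uncurry A)) (fderiv ℝ (uncurry C)) a c b d ∅ countable_empty
    hA.continuous.continuousOn hC.continuous.continuousOn
    (fun p _ => hA.hasFDerivAt p) (fun p _ => hC.hasFDerivAt p)
    (((uncurry_pdt_eq_fderiv hA ▸ hA.pdt.continuous).add
      (uncurry_pdx_eq_fderiv hC ▸ hC.pdx.continuous)).continuousOn.integrableOn_compact
        (isCompact_uIcc.prod isCompact_uIcc))
  simp only [← pdt_eq_fderiv hA, ← pdx_eq_fderiv hC, uncurry_apply_pair] at hdiv
  rw [intervalIntegral.integral_sub ((hC.continuous.uncurry_right d).intervalIntegrable a b)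
      ((hC.continuous.uncurry_right c).intervalIntegrable a b),
    intervalIntegral.integral_sub ((hA.continuous.uncurry_left b).intervalIntegrable c d)
      ((hA.continuous.uncurry_left a).intervalIntegrable c d), hdiv]
  ring

end IteratedIntegrals

lemma deriv_eq_zero_of_eqOn_Icc {f : ℝ → ℝ} {a b x : ℝ} (hab : a < b)
    (hf : DifferentiableAt ℝ f x) (h0 : EqOn f 0 (Icc a b)) (hx : x ∈ Icc a b) :
    deriv f x = 0 := by
  rw [← hf.derivWithin (uniqueDiffOn_Icc hab x hx), derivWithin_congr h0 (h0 hx)]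
  exact congrFun (derivWithin_fun_const _ _) x

namespace KdVCarleman

variable (s : ℝ) (φ u α : ℝ → ℝ → ℝ)

noncomputable def M₁ : ℝ → ℝ → ℝ := fun t x =>
  3 * s * (pdx φ t x * pdx (pdx u) t x + pdx (pdx φ) t x * pdx u t x) + α t x * u t x

noncomputable def M₂ : ℝ → ℝ → ℝ := fun t x =>
  pdt u t x + pdx (pdx (pdx u)) t x
    + 3 * s ^ 2 * ((pdx φ t x) ^ 2 * pdx u t x + pdx φ t x * pdx (pdx φ) t x * u t x)

noncomputable def coeffU : ℝ → ℝ → ℝ := fun t x =>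
  -(pdt α t x + pdx (pdx (pdx α)) t x + 3 * s ^ 2 * (pdx φ t x) ^ 2 * pdx α t x)
    + 9 * s ^ 3 *
        (pdx (pdx (fun t x => (pdx φ t x) ^ 2 * pdx (pdx φ) t x)) t x
          - pdx (fun t x => pdx φ t x * (pdx (pdx φ) t x) ^ 2) t x)

noncomputable def coeffUx : ℝ → ℝ → ℝ := fun t x =>
  3 * pdx α t x - 27 * s ^ 3 * (pdx φ t x) ^ 2 * pdx (pdx φ) t x
    + 3 * s * (pdt (pdx φ) t x + pdx (pdx (pdx (pdx φ))) t x)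

noncomputable def energy : ℝ → ℝ → ℝ := fun t x =>
  α t x * u t x ^ 2 - 3 * s * pdx φ t x * pdx u t x ^ 2

noncomputable def boundaryForm : ℝ → ℝ → ℝ := fun t x =>
  3 * s * pdx φ t x * (pdx (pdx u) t x) ^ 2
    + (9 * s ^ 3 * (pdx φ t x) ^ 3 - 3 * s * pdx (pdx (pdx φ)) t x - α t x) * (pdx u t x) ^ 2
    + 6 * s * pdx (pdx φ) t x * pdx u t x * pdx (pdx u) t x

noncomputable def flux : ℝ → ℝ → ℝ := fun t x =>
  boundaryForm s φ u α t x + 6 * s * pdx φ t x * pdx u t x * pdt u t x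
    + u t x * (18 * s ^ 3 * pdx φ t x ^ 2 * pdx (pdx φ) t x * pdx u t x
      - 9 * s ^ 3 * (pdx φ t x * pdx (pdx φ) t x ^ 2 + pdx φ t x ^ 2 * pdx (pdx (pdx φ)) t x)
          * u t x
      + 2 * α t x * pdx (pdx u) t x - 2 * pdx α t x * pdx u t x
      + (pdx (pdx α) t x + 3 * s ^ 2 * pdx φ t x ^ 2 * α t x) * u t x)

variable {φ u α}

theorem two_mul_M₁_mul_M₂ (hφ : Smooth₂ φ) (hu : Smooth₂ u) (hα : Smooth₂ α) (t x : ℝ) :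
    2 * (M₁ s φ u α t x * M₂ s φ u t x) =
      coeffU s φ α t x * u t x ^ 2 + coeffUx s φ α t x * pdx u t x ^ 2
        - 9 * s * (pdx (pdx φ) t x * pdx (pdx u) t x ^ 2)
        + (pdt (energy s φ u α) t x + pdx (flux s φ u α) t x) := by
  unfold M₁ M₂ coeffU coeffUx energy flux boundaryForm
  -- the smoothness side conditions of the product rules are discharged by `simp` itself,
  -- recursing through the subterms, hence the discharge depth
  simp (maxDischargeDepth := 20) only [pdx_const, pdx_add, pdx_sub, pdx_mul, pdx_pow, pdt_const,
    pdt_sub, pdt_mul, pdt_pow, pdx_pdt_comm hu, hφ, hu, hα, Smooth₂.const, Smooth₂.add,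
    Smooth₂.sub, Smooth₂.mul, Smooth₂.pow, Smooth₂.pdx, Smooth₂.pdt]
  push_cast
  ring

theorem smooth₂_coeffU (hφ : Smooth₂ φ) (hα : Smooth₂ α) : Smooth₂ (coeffU s φ α) := by
  unfold coeffU; simp (maxDischargeDepth := 20) [hφ, hα]

theorem smooth₂_coeffUx (hφ : Smooth₂ φ) (hα : Smooth₂ α) : Smooth₂ (coeffUx s φ α) := by
  unfold coeffUx; simp (maxDischargeDepth := 20) [hφ, hα]

theorem smooth₂_energy (hφ : Smooth₂ φ) (hu : Smooth₂ u) (hα : Smooth₂ α) :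
    Smooth₂ (energy s φ u α) := by
  unfold energy; simp (maxDischargeDepth := 20) [hφ, hu, hα]

theorem smooth₂_flux (hφ : Smooth₂ φ) (hu : Smooth₂ u) (hα : Smooth₂ α) :
    Smooth₂ (flux s φ u α) := by
  unfold flux boundaryForm; simp (maxDischargeDepth := 20) [hφ, hu, hα]

theorem energy_eq_zero (hu : Smooth₂ u) {a b τ x : ℝ} (hab : a < b)
    (h0 : ∀ y ∈ Icc a b, u τ y = 0) (hx : x ∈ Icc a b) : energy s φ u α τ x = 0 := by
  have hux : pdx u τ x = 0 := deriv_eq_zero_of_eqOn_Icc hab (hu.differentiableAt_x τ x) h0 hx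
  simp [energy, h0 x hx, hux]

theorem flux_eq_boundaryForm (hu : Smooth₂ u) {a b t x : ℝ} (hab : a < b)
    (h0 : ∀ τ ∈ Icc a b, u τ x = 0) (ht : t ∈ Icc a b) :
    flux s φ u α t x = boundaryForm s φ u α t x := by
  have hut : pdt u t x = 0 := deriv_eq_zero_of_eqOn_Icc hab (hu.differentiableAt_t t x) h0 ht
  simp [flux, h0 t ht, hut]

theorem integral_integral_pdt_energy_add_pdx_flux (hφ : Smooth₂ φ) (hu : Smooth₂ u)
    (hα : Smooth₂ α) {T L : ℝ} (hT : 0 < T) (hL : 0 < L)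
    (hbc : ∀ t ∈ Icc 0 T, u t 0 = 0 ∧ u t L = 0) (hic : ∀ x ∈ Icc 0 L, u 0 x = 0 ∧ u T x = 0) :
    ∫ t in (0:ℝ)..T, ∫ x in (0:ℝ)..L, (pdt (energy s φ u α) t x + pdx (flux s φ u α) t x) =
      ∫ t in (0:ℝ)..T, (boundaryForm s φ u α t L - boundaryForm s φ u α t 0) := by
  have hE : EqOn (fun x => energy s φ u α T x - energy s φ u α 0 x) (fun _ => 0) (uIcc 0 L) := by
    intro x hx
    rw [uIcc_of_le hL.le] at hx
    simp [energy_eq_zero s hu hL (fun y hy => (hic y hy).2) hx,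
      energy_eq_zero s hu hL (fun y hy => (hic y hy).1) hx]
  have hF : EqOn (fun t => flux s φ u α t L - flux s φ u α t 0)
      (fun t => boundaryForm s φ u α t L - boundaryForm s φ u α t 0) (uIcc 0 T) := by
    intro t ht
    rw [uIcc_of_le hT.le] at ht
    simp [flux_eq_boundaryForm s hu hT (fun τ hτ => (hbc τ hτ).2) ht,
      flux_eq_boundaryForm s hu hT (fun τ hτ => (hbc τ hτ).1) ht]
  rw [integral_integral_pdt_add_pdx (smooth₂_energy s hφ hu hα) (smooth₂_flux s hφ hu hα),
    intervalIntegral.integral_congr hE, intervalIntegral.integral_congr hF,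
    intervalIntegral.integral_zero, add_zero]

theorem two_mul_integral_integral_M₁_mul_M₂ (hφ : Smooth₂ φ) (hu : Smooth₂ u)
    (hα : Smooth₂ α) {T L : ℝ} (hT : 0 < T) (hL : 0 < L)
    (hbc : ∀ t ∈ Icc 0 T, u t 0 = 0 ∧ u t L = 0) (hic : ∀ x ∈ Icc 0 L, u 0 x = 0 ∧ u T x = 0) :
    2 * (∫ t in (0:ℝ)..T, ∫ x in (0:ℝ)..L, M₁ s φ u α t x * M₂ s φ u t x) =
      (∫ t in (0:ℝ)..T, ∫ x in (0:ℝ)..L, coeffU s φ α t x * u t x ^ 2)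
        + (∫ t in (0:ℝ)..T, ∫ x in (0:ℝ)..L, coeffUx s φ α t x * pdx u t x ^ 2)
        - 9 * s * (∫ t in (0:ℝ)..T, ∫ x in (0:ℝ)..L, pdx (pdx φ) t x * pdx (pdx u) t x ^ 2)
        + ∫ t in (0:ℝ)..T, (boundaryForm s φ u α t L - boundaryForm s φ u α t 0) := by
  have h₁ := (smooth₂_coeffU s hφ hα).mul (hu.pow 2)
  have h₂ := (smooth₂_coeffUx s hφ hα).mul (hu.pdx.pow 2)
  have h₃ := (Smooth₂.const (9 * s)).mul (hφ.pdx.pdx.mul (hu.pdx.pdx.pow 2))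
  have h₄ := (smooth₂_energy s hφ hu hα).pdt.add (smooth₂_flux s hφ hu hα).pdx
  conv_lhs => simp only [← intervalIntegral.integral_const_mul, two_mul_M₁_mul_M₂ s hφ hu hα]
  rw [integral_integral_add ((h₁.add h₂).sub h₃).continuous h₄.continuous,
    integral_integral_sub (h₁.add h₂).continuous h₃.continuous,
    integral_integral_add h₁.continuous h₂.continuous,
    integral_integral_pdt_energy_add_pdx_flux s hφ hu hα hT hL hbc hic]
  simp only [intervalIntegral.integral_const_mul]

end KdVCarleman

open KdVCarleman

/-- exact computation of `2∫∫ (M1 u)(M2 u)` for the conjugated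
KdV operator, with weight `φ`, parameter `s`, and `u` vanishing on the
relevant parts of the boundary of `[0,T]×[0,L]`. -/
theorem stmt_1 (T L : ℝ) (hT : 0 < T) (hL : 0 < L) (s : ℝ)
    (φ u : ℝ → ℝ → ℝ)
    (hφ : ContDiff ℝ (⊤ : ℕ∞) (Function.uncurry φ))
    (hu : ContDiff ℝ (⊤ : ℕ∞) (Function.uncurry u))
    (hbc : ∀ t ∈ Set.Icc (0:ℝ) T, u t 0 = 0 ∧ u t L = 0 ∧ pdx u t L = 0)
    (hic : ∀ x ∈ Set.Icc (0:ℝ) L, u 0 x = 0 ∧ u T x = 0)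
    (α M1 M2 B : ℝ → ℝ → ℝ)
    (hα : α = fun t x =>
      s * (pdt φ t x + pdx (pdx (pdx φ)) t x) + s ^ 3 * (pdx φ t x) ^ 3)
    (hM1 : M1 = fun t x =>
      3 * s * (pdx φ t x * pdx (pdx u) t x + pdx (pdx φ) t x * pdx u t x) + α t x * u t x)
    (hM2 : M2 = fun t x =>
      pdt u t x + pdx (pdx (pdx u)) t x
        + 3 * s ^ 2 * ((pdx φ t x) ^ 2 * pdx u t x + pdx φ t x * pdx (pdx φ) t x * u t x))
    (hB : B = fun t x =>
      3 * s * pdx φ t x * (pdx (pdx u) t x) ^ 2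
        + (9 * s ^ 3 * (pdx φ t x) ^ 3 - 3 * s * pdx (pdx (pdx φ)) t x - α t x)
            * (pdx u t x) ^ 2
        + 6 * s * pdx (pdx φ) t x * pdx u t x * pdx (pdx u) t x) :
    2 * (∫ t in (0:ℝ)..T, ∫ x in (0:ℝ)..L, M1 t x * M2 t x) =
      (∫ t in (0:ℝ)..T, ∫ x in (0:ℝ)..L,
          (-(pdt α t x + pdx (pdx (pdx α)) t x + 3 * s ^ 2 * (pdx φ t x) ^ 2 * pdx α t x)
            + 9 * s ^ 3 *
                (pdx (pdx (fun t x => (pdx φ t x) ^ 2 * pdx (pdx φ) t x)) t x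
                  - pdx (fun t x => pdx φ t x * (pdx (pdx φ) t x) ^ 2) t x)) * (u t x) ^ 2)
        + (∫ t in (0:ℝ)..T, ∫ x in (0:ℝ)..L,
            (3 * pdx α t x - 27 * s ^ 3 * (pdx φ t x) ^ 2 * pdx (pdx φ) t x
              + 3 * s * (pdt (pdx φ) t x + pdx (pdx (pdx (pdx φ))) t x)) * (pdx u t x) ^ 2)
        - 9 * s * (∫ t in (0:ℝ)..T, ∫ x in (0:ℝ)..L, pdx (pdx φ) t x * (pdx (pdx u) t x) ^ 2)
        + ∫ t in (0:ℝ)..T, (B t L - B t 0) := by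
  replace hφ : Smooth₂ φ := hφ
  replace hu : Smooth₂ u := hu
  have hα' : Smooth₂ α := by
    subst hα; simp (maxDischargeDepth := 10) [hφ]
  obtain rfl : M1 = M₁ s φ u α := hM1
  obtain rfl : M2 = M₂ s φ u := hM2
  obtain rfl : B = boundaryForm s φ u α := hB
  exact two_mul_integral_integral_M₁_mul_M₂ s hφ hu hα' hT hL
    (fun t ht => ⟨(hbc t ht).1, (hbc t ht).2.1⟩) hic
end

section
/- (Energy estimate for the adjoint system with small potential.) Let L > 0. There exists a constant C = C(L) > 0 such that for every T > 0, every ξ ∈ C^∞([0,T]×[0,L]) with ‖ξ‖_{L²(0,T;H¹(0,L))} ≤ 1/√C, and every v ∈ C^∞([0,T]×[0,L]) satisfying −v_t − ξ v_x − v_xxx = 0 on (0,T)×(0,L) and v(t,0) = v(t,L) = v_x(t,0) = 0 for all t ∈ [0,T], one has: max_{t∈[0,T]} ∫₀^L v(t,x)² dx + ∫₀^T∫₀^L v_x² dx dt ≤ C ∫₀^L v(T,x)² dx. -/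
open Set Function intervalIntegral

section PartialDerivatives

variable {f : ℝ → ℝ → ℝ}

lemma ContDiff.uncurry_flip {n : WithTop ℕ∞} (hf : ContDiff ℝ n (uncurry f)) :
    ContDiff ℝ n (uncurry (flip f)) :=
  hf.comp (contDiff_snd.prodMk contDiff_fst)

lemma ContDiff.uncurry_pdx (hf : ContDiff ℝ (⊤ : ℕ∞) (uncurry f)) :
    ContDiff ℝ (⊤ : ℕ∞) (uncurry (pdx f)) :=
  ContDiff.fderiv_apply (f := fun p y => f p.1 y) (g := Prod.snd) (k := fun _ => 1)
    (hf.comp (contDiff_fst.fst.prodMk contDiff_snd)) contDiff_snd contDiff_const (by simp)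

-- `pdt f` is definitionally `flip (pdx (flip f))`.
lemma ContDiff.uncurry_pdt (hf : ContDiff ℝ (⊤ : ℕ∞) (uncurry f)) :
    ContDiff ℝ (⊤ : ℕ∞) (uncurry (pdt f)) :=
  hf.uncurry_flip.uncurry_pdx.uncurry_flip

lemma hasDerivAt_pdx (hf : ContDiff ℝ (⊤ : ℕ∞) (uncurry f)) (t x : ℝ) :
    HasDerivAt (f t) (pdx f t x) x :=
  ((hf.comp (contDiff_const.prodMk contDiff_id)).differentiable (by simp) x).hasDerivAt

lemma hasDerivAt_pdt (hf : ContDiff ℝ (⊤ : ℕ∞) (uncurry f)) (t x : ℝ) :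
    HasDerivAt (fun s => f s x) (pdt f t x) t :=
  hasDerivAt_pdx hf.uncurry_flip x t

end PartialDerivatives

lemma integral_integral_mono_on {f g : ℝ → ℝ → ℝ} (hf : Continuous (uncurry f))
    (hg : Continuous (uncurry g)) {a b c d : ℝ} (hab : a ≤ b) (hcd : c ≤ d)
    (h : ∀ t ∈ Icc a b, ∀ x ∈ Icc c d, f t x ≤ g t x) :
    ∫ t in a..b, ∫ x in c..d, f t x ≤ ∫ t in a..b, ∫ x in c..d, g t x :=
  integral_mono_on hab (Continuous.intervalIntegrable (by fun_prop) _ _)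
    (Continuous.intervalIntegrable (by fun_prop) _ _) fun t ht =>
      integral_mono_on hcd (Continuous.intervalIntegrable (by fun_prop) _ _)
        (Continuous.intervalIntegrable (by fun_prop) _ _) (h t ht)

lemma integral_sub_eq_integral_integral_of_hasDerivAt {F F' : ℝ → ℝ → ℝ}
    (hF : ∀ t x, HasDerivAt (fun s => F s x) (F' t x) t) (hF' : Continuous (uncurry F'))
    (a b s T : ℝ) :
    ∫ x in a..b, (F T x - F s x) = ∫ t in s..T, ∫ x in a..b, F' t x := by
  have hftc (x : ℝ) : F T x - F s x = ∫ t in s..T, F' t x :=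
    (integral_eq_sub_of_hasDerivAt (fun t _ => hF t x)
      (Continuous.intervalIntegrable (by fun_prop) _ _)).symm
  simp_rw [hftc]
  refine (MeasureTheory.intervalIntegral_intervalIntegral_swap ?_).symm
  exact (hF'.continuousOn.integrableOn_compact (isCompact_uIcc.prod isCompact_uIcc)).mono_set
    (prod_mono uIoc_subset_uIcc uIoc_subset_uIcc)

lemma sq_le_mul_integral_sq_add_sq_deriv {g g' : ℝ → ℝ} (hg : ∀ x, HasDerivAt g (g' x) x)
    (hg' : Continuous g') {L : ℝ} (hL : 0 < L) {x : ℝ} (hx : x ∈ Icc 0 L) :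
    g x ^ 2 ≤ (1 + 1 / L) * ∫ y in 0..L, (g y ^ 2 + g' y ^ 2) := by
  have hgc : Continuous g := continuous_iff_continuousAt.2 fun y => (hg y).continuousAt
  set S := ∫ y in 0..L, (g y ^ 2 + g' y ^ 2)
  obtain ⟨y₀, hy₀, hmin⟩ := isCompact_Icc.exists_isMinOn (nonempty_Icc.2 hL.le)
    (hgc.pow 2).continuousOn
  have hmin_le : L * g y₀ ^ 2 ≤ S := by
    calc L * g y₀ ^ 2 = ∫ _ in 0..L, g y₀ ^ 2 := by simp
      _ ≤ S := integral_mono_on hL.le intervalIntegrable_const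
          (Continuous.intervalIntegrable (by fun_prop) _ _)
          fun y hy => le_add_of_le_of_nonneg (hmin hy) (sq_nonneg _)
  have hd (y : ℝ) : HasDerivAt (fun y => g y ^ 2) (2 * g y * g' y) y := by
    simpa using (hg y).fun_pow 2
  have hftc : g x ^ 2 - g y₀ ^ 2 = ∫ y in y₀..x, 2 * g y * g' y :=
    (integral_eq_sub_of_hasDerivAt (fun y _ => hd y)
      (Continuous.intervalIntegrable (by fun_prop) _ _)).symm
  have hvar : g x ^ 2 - g y₀ ^ 2 ≤ S := by
    calc g x ^ 2 - g y₀ ^ 2 ≤ ∫ y in uIoc y₀ x, |2 * g y * g' y| := by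
          rw [hftc]
          exact (le_abs_self _).trans
            (by simpa only [Real.norm_eq_abs] using
              norm_integral_le_integral_norm_uIoc (f := fun y => 2 * g y * g' y))
      _ ≤ ∫ y in uIoc y₀ x, (g y ^ 2 + g' y ^ 2) :=
          MeasureTheory.setIntegral_mono_on (Continuous.integrableOn_uIoc (by fun_prop))
            (Continuous.integrableOn_uIoc (by fun_prop)) measurableSet_uIoc fun y _ => by
              rw [abs_mul, abs_mul, abs_two]
              nlinarith [sq_nonneg (|g y| - |g' y|), sq_abs (g y), sq_abs (g' y)]
      _ ≤ ∫ y in Ioc 0 L, (g y ^ 2 + g' y ^ 2) :=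
          MeasureTheory.setIntegral_mono_set (Continuous.integrableOn_Ioc (by fun_prop))
            (MeasureTheory.ae_of_all _ fun y => by positivity)
            (Ioc_subset_Ioc (le_inf hy₀.1 hx.1) (sup_le hy₀.2 hx.2)).eventuallyLE
      _ = S := (integral_of_le hL.le).symm
  have : g y₀ ^ 2 ≤ S / L := by rw [le_div_iff₀ hL]; linarith
  calc g x ^ 2 ≤ S / L + S := by linarith
    _ = (1 + 1 / L) * S := by ring

lemma integral_affine_mul_mul_deriv3 {g g₁ g₂ g₃ : ℝ → ℝ} (h₁ : ∀ x, HasDerivAt g (g₁ x) x)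
    (h₂ : ∀ x, HasDerivAt g₁ (g₂ x) x) (h₃ : ∀ x, HasDerivAt g₂ (g₃ x) x)
    (hg₃ : Continuous g₃) (a b L : ℝ) (hg0 : g 0 = 0) (hgL : g L = 0) (hg₁0 : g₁ 0 = 0) :
    ∫ x in 0..L, ((a + b * x) * (g x * g₃ x) - 3 * b / 2 * g₁ x ^ 2)
      = -(a + b * L) / 2 * g₁ L ^ 2 := by
  have hc (f f' : ℝ → ℝ) (h : ∀ x, HasDerivAt f (f' x) x) : Continuous f :=
    continuous_iff_continuousAt.2 fun y => (h y).continuousAt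
  have := hc _ _ h₁
  have := hc _ _ h₂
  have hW (x : ℝ) : HasDerivAt
      (fun y => (a + b * y) * (g y * g₂ y - g₁ y ^ 2 / 2) - b * (g y * g₁ y))
      ((a + b * x) * (g x * g₃ x) - 3 * b / 2 * g₁ x ^ 2) x := by
    have := ((((hasDerivAt_id x).const_mul b).const_add a).mul
      (((h₁ x).mul (h₃ x)).sub (((h₂ x).pow 2).div_const 2))).sub
      (((h₁ x).mul (h₂ x)).const_mul b)
    exact this.congr_deriv (by simp; ring)
  rw [integral_eq_sub_of_hasDerivAt (fun x _ => hW x)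
    (Continuous.intervalIntegrable (by fun_prop) _ _)]
  simp [hg0, hgL, hg₁0]
  ring

lemma two_mul_integral_integral_abs_mul_mul_le {ξ v : ℝ → ℝ → ℝ}
    (hξ : ContDiff ℝ (⊤ : ℕ∞) (uncurry ξ)) (hv : ContDiff ℝ (⊤ : ℕ∞) (uncurry v))
    {T L M K : ℝ} (hT : 0 ≤ T) (hL : 0 < L) (hM : ∀ τ ∈ Icc 0 T, ∫ x in 0..L, v τ x ^ 2 ≤ M) :
    2 * K * (∫ τ in 0..T, ∫ x in 0..L, |ξ τ x * (v τ x * pdx v τ x)|) ≤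
      K ^ 2 * (1 + 1 / L) * M * (∫ τ in 0..T, ∫ x in 0..L, (ξ τ x ^ 2 + pdx ξ τ x ^ 2))
        + ∫ τ in 0..T, ∫ x in 0..L, pdx v τ x ^ 2 := by
  have := hξ.continuous
  have := hξ.uncurry_pdx.continuous
  have := hv.continuous
  have := hv.uncurry_pdx.continuous
  set c := 1 + 1 / L
  set H := fun τ => ∫ x in 0..L, (ξ τ x ^ 2 + pdx ξ τ x ^ 2)
  have hH : Continuous H := by fun_prop
  have hpointwise (τ x : ℝ) (hx : x ∈ Icc 0 L) :
      2 * K * |ξ τ x * (v τ x * pdx v τ x)| ≤ K ^ 2 * c * H τ * v τ x ^ 2 + pdx v τ x ^ 2 := by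
    have hsob : ξ τ x ^ 2 ≤ c * H τ :=
      sq_le_mul_integral_sq_add_sq_deriv (hasDerivAt_pdx hξ τ) (by fun_prop) hL hx
    have hamgm := two_mul_le_add_sq (K * |ξ τ x * v τ x|) |pdx v τ x|
    rw [mul_pow, sq_abs, sq_abs, mul_pow] at hamgm
    have : K ^ 2 * (ξ τ x ^ 2 * v τ x ^ 2) ≤ K ^ 2 * (c * H τ * v τ x ^ 2) := by gcongr
    rw [← mul_assoc, abs_mul _ (pdx v τ x)]
    linarith
  calc 2 * K * (∫ τ in 0..T, ∫ x in 0..L, |ξ τ x * (v τ x * pdx v τ x)|)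
      = ∫ τ in 0..T, ∫ x in 0..L, 2 * K * |ξ τ x * (v τ x * pdx v τ x)| := by
        simp only [integral_const_mul]
    _ ≤ ∫ τ in 0..T, ∫ x in 0..L, (K ^ 2 * c * H τ * v τ x ^ 2 + pdx v τ x ^ 2) :=
        integral_integral_mono_on (by fun_prop) (by fun_prop) hT hL.le
          fun τ _ x hx => hpointwise τ x hx
    _ = ∫ τ in 0..T, (K ^ 2 * c * H τ * (∫ x in 0..L, v τ x ^ 2) + ∫ x in 0..L, pdx v τ x ^ 2) := by
        refine integral_congr fun τ _ => ?_
        rw [intervalIntegral.integral_add, integral_const_mul]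
        all_goals exact Continuous.intervalIntegrable (by fun_prop) _ _
    _ ≤ ∫ τ in 0..T, (K ^ 2 * c * M * H τ + ∫ x in 0..L, pdx v τ x ^ 2) :=
        integral_mono_on hT (Continuous.intervalIntegrable (by fun_prop) _ _)
          (Continuous.intervalIntegrable (by fun_prop) _ _) fun τ hτ => by
            have : 0 ≤ H τ := integral_nonneg hL.le fun x _ => by positivity
            have := mul_le_mul_of_nonneg_left (hM τ hτ) (by positivity : 0 ≤ K ^ 2 * c * H τ)
            linarith
    _ = _ := by
        rw [intervalIntegral.integral_add, integral_const_mul]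
        all_goals exact Continuous.intervalIntegrable (by fun_prop) _ _

lemma mul_le_one_of_sqrt_le_one_div_sqrt {C N : ℝ} (hC : 0 < C) (h : √N ≤ 1 / √C) :
    C * N ≤ 1 := by
  have hN := (Real.sqrt_le_iff.1 h).2
  rw [div_pow, one_pow, Real.sq_sqrt hC.le] at hN
  calc C * N ≤ C * (1 / C) := by gcongr
    _ = 1 := by field_simp

structure IsAdjointSolution (T L : ℝ) (ξ v : ℝ → ℝ → ℝ) : Prop where
  smooth_potential : ContDiff ℝ (⊤ : ℕ∞) (uncurry ξ)
  smooth : ContDiff ℝ (⊤ : ℕ∞) (uncurry v)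
  pde : ∀ t ∈ Ioo 0 T, ∀ x ∈ Ioo 0 L,
    -pdt v t x - ξ t x * pdx v t x - pdx (pdx (pdx v)) t x = 0
  boundary : ∀ t ∈ Icc 0 T, v t 0 = 0 ∧ v t L = 0 ∧ pdx v t 0 = 0

namespace IsAdjointSolution

variable {T L : ℝ} {ξ v : ℝ → ℝ → ℝ}

lemma pdt_eq (h : IsAdjointSolution T L ξ v) (hT : 0 < T) (hL : 0 < L) {t x : ℝ}
    (ht : t ∈ Icc 0 T) (hx : x ∈ Icc 0 L) :
    pdt v t x = -(ξ t x * pdx v t x) - pdx (pdx (pdx v)) t x := by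
  have := h.smooth_potential.continuous
  have := h.smooth.uncurry_pdt.continuous
  have := h.smooth.uncurry_pdx.continuous
  have := h.smooth.uncurry_pdx.uncurry_pdx.uncurry_pdx.continuous
  have hopen : EqOn (fun p : ℝ × ℝ => pdt v p.1 p.2)
      (fun p => -(ξ p.1 p.2 * pdx v p.1 p.2) - pdx (pdx (pdx v)) p.1 p.2) (Ioo 0 T ×ˢ Ioo 0 L) :=
    fun p hp => by linarith [h.pde p.1 hp.1 p.2 hp.2]
  refine hopen.of_subset_closure (by fun_prop) (by fun_prop)
    (prod_mono Ioo_subset_Icc_self Ioo_subset_Icc_self) ?_ (mk_mem_prod ht hx)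
  rw [closure_prod_eq, closure_Ioo hT.ne, closure_Ioo hL.ne]

lemma integral_weight_mul_pdt_eq (h : IsAdjointSolution T L ξ v) (hT : 0 < T) (hL : 0 < L)
    {τ : ℝ} (hτ : τ ∈ Icc 0 T) :
    ∫ x in 0..L, 2 * (1 + L - x) * (v τ x * pdt v τ x)
      = -2 * (∫ x in 0..L, (1 + L - x) * (ξ τ x * (v τ x * pdx v τ x)))
        + (pdx v τ L ^ 2 + 3 * ∫ x in 0..L, pdx v τ x ^ 2) := by
  obtain ⟨hv0, hvL, hvx0⟩ := h.boundary τ hτ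
  have hv := h.smooth
  have := h.smooth_potential.continuous
  have := hv.continuous
  have := hv.uncurry_pdx.continuous
  have := hv.uncurry_pdx.uncurry_pdx.uncurry_pdx.continuous
  have hparts : ∫ x in 0..L, ((1 + L - x) * (v τ x * pdx (pdx (pdx v)) τ x)
      + 3 / 2 * pdx v τ x ^ 2) = -(pdx v τ L ^ 2 / 2) := by
    convert integral_affine_mul_mul_deriv3 (hasDerivAt_pdx hv τ)
      (hasDerivAt_pdx hv.uncurry_pdx τ) (hasDerivAt_pdx hv.uncurry_pdx.uncurry_pdx τ)
      (by fun_prop) (1 + L) (-1) L hv0 hvL hvx0 using 1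
    · congr 1; ext x; ring
    · ring
  calc ∫ x in 0..L, 2 * (1 + L - x) * (v τ x * pdt v τ x)
      = ∫ x in 0..L, (-2 * ((1 + L - x) * (ξ τ x * (v τ x * pdx v τ x)))
          - 2 * ((1 + L - x) * (v τ x * pdx (pdx (pdx v)) τ x) + 3 / 2 * pdx v τ x ^ 2)
          + 3 * pdx v τ x ^ 2) := by
        refine integral_congr fun x hx => ?_
        rw [uIcc_of_le hL.le] at hx
        simp only [h.pdt_eq hT hL hτ hx]
        ring
    _ = _ := by
        rw [intervalIntegral.integral_add, intervalIntegral.integral_sub, integral_const_mul,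
          integral_const_mul, integral_const_mul, hparts]
        · ring
        all_goals exact Continuous.intervalIntegrable (by fun_prop) _ _

lemma weighted_energy_eq (h : IsAdjointSolution T L ξ v) (hT : 0 < T) (hL : 0 < L) {s : ℝ}
    (hs : s ∈ Icc 0 T) :
    (∫ x in 0..L, (1 + L - x) * v s x ^ 2)
        + (∫ τ in s..T, (pdx v τ L ^ 2 + 3 * ∫ x in 0..L, pdx v τ x ^ 2))
      = (∫ x in 0..L, (1 + L - x) * v T x ^ 2)
        + 2 * ∫ τ in s..T, ∫ x in 0..L, (1 + L - x) * (ξ τ x * (v τ x * pdx v τ x)) := by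
  have hv := h.smooth
  have := h.smooth_potential.continuous
  have := hv.continuous
  have := hv.uncurry_pdt.continuous
  have := hv.uncurry_pdx.continuous
  have hF (t x : ℝ) : HasDerivAt (fun s => (1 + L - x) * v s x ^ 2)
      (2 * (1 + L - x) * (v t x * pdt v t x)) t :=
    (((hasDerivAt_pdt hv t x).fun_pow 2).const_mul (1 + L - x)).congr_deriv (by ring)
  have hFTC := integral_sub_eq_integral_integral_of_hasDerivAt hF (by fun_prop) 0 L s T
  rw [integral_sub (Continuous.intervalIntegrable (by fun_prop) _ _)
    (Continuous.intervalIntegrable (by fun_prop) _ _),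
    integral_congr fun τ hτ => h.integral_weight_mul_pdt_eq hT hL
      (Icc_subset_Icc hs.1 le_rfl (by rwa [uIcc_of_le hs.2] at hτ)),
    intervalIntegral.integral_add (Continuous.intervalIntegrable (by fun_prop) _ _)
      (Continuous.intervalIntegrable (by fun_prop) _ _), integral_const_mul] at hFTC
  linarith

lemma energy_add_integral_le (h : IsAdjointSolution T L ξ v) (hT : 0 < T) (hL : 0 < L)
    {s : ℝ} (hs : s ∈ Icc 0 T) :
    (∫ x in 0..L, v s x ^ 2) + (∫ τ in s..T, ∫ x in 0..L, pdx v τ x ^ 2) ≤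
      (1 + L) * ((∫ x in 0..L, v T x ^ 2)
        + 2 * ∫ τ in 0..T, ∫ x in 0..L, |ξ τ x * (v τ x * pdx v τ x)|) := by
  have := h.smooth_potential.continuous
  have := h.smooth.continuous
  have := h.smooth.uncurry_pdx.continuous
  have hs_energy : ∫ x in 0..L, v s x ^ 2 ≤ ∫ x in 0..L, (1 + L - x) * v s x ^ 2 :=
    integral_mono_on hL.le (Continuous.intervalIntegrable (by fun_prop) _ _)
      (Continuous.intervalIntegrable (by fun_prop) _ _) fun x hx =>
        le_mul_of_one_le_left (sq_nonneg _) (by linarith [hx.2])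
  have hs_dissipation : ∫ τ in s..T, ∫ x in 0..L, pdx v τ x ^ 2
      ≤ ∫ τ in s..T, (pdx v τ L ^ 2 + 3 * ∫ x in 0..L, pdx v τ x ^ 2) :=
    integral_mono_on hs.2 (Continuous.intervalIntegrable (by fun_prop) _ _)
      (Continuous.intervalIntegrable (by fun_prop) _ _) fun τ _ => by
        have : 0 ≤ ∫ x in 0..L, pdx v τ x ^ 2 := integral_nonneg hL.le fun x _ => sq_nonneg _
        nlinarith [sq_nonneg (pdx v τ L)]
  have hT_energy : ∫ x in 0..L, (1 + L - x) * v T x ^ 2 ≤ (1 + L) * ∫ x in 0..L, v T x ^ 2 := by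
    rw [← integral_const_mul]
    exact integral_mono_on hL.le (Continuous.intervalIntegrable (by fun_prop) _ _)
      (Continuous.intervalIntegrable (by fun_prop) _ _) fun x hx =>
        mul_le_mul_of_nonneg_right (by linarith [hx.1]) (sq_nonneg _)
  have hsource : ∫ τ in s..T, ∫ x in 0..L, (1 + L - x) * (ξ τ x * (v τ x * pdx v τ x))
      ≤ (1 + L) * ∫ τ in 0..T, ∫ x in 0..L, |ξ τ x * (v τ x * pdx v τ x)| := by
    calc ∫ τ in s..T, ∫ x in 0..L, (1 + L - x) * (ξ τ x * (v τ x * pdx v τ x))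
        ≤ ∫ τ in s..T, ∫ x in 0..L, (1 + L) * |ξ τ x * (v τ x * pdx v τ x)| :=
          integral_integral_mono_on (by fun_prop) (by fun_prop) hs.2 hL.le fun τ _ x hx =>
            (le_abs_self _).trans <| by
              rw [abs_mul, abs_of_nonneg (by linarith [hx.2])]
              exact mul_le_mul_of_nonneg_right (by linarith [hx.1]) (abs_nonneg _)
      _ = (1 + L) * ∫ τ in s..T, ∫ x in 0..L, |ξ τ x * (v τ x * pdx v τ x)| := by
          simp only [integral_const_mul]
      _ ≤ (1 + L) * ∫ τ in 0..T, ∫ x in 0..L, |ξ τ x * (v τ x * pdx v τ x)| := by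
          gcongr
          exact integral_mono_interval hs.1 hs.2 le_rfl
            (MeasureTheory.ae_of_all _ fun τ => integral_nonneg hL.le fun x _ => abs_nonneg _)
            (Continuous.intervalIntegrable (by fun_prop) _ _)
  linarith [h.weighted_energy_eq hT hL hs]

end IsAdjointSolution

/-- energy estimate for the adjoint system with small potential.
There is `C = C(L) > 0` such that for every `T > 0`, every potential `ξ` with
`‖ξ‖_{L²(0,T;H¹(0,L))} ≤ 1/√C` and every solution `v` of the adjoint system,
`max_{t∈[0,T]} ∫ v(t)² dx + ∫∫ v_x² ≤ C ∫ v(T)² dx`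
(the max over `t` is expressed as a bound for every `t ∈ [0,T]`). -/
theorem stmt_6 (L : ℝ) (hL : 0 < L) :
    ∃ C : ℝ, 0 < C ∧
      ∀ T : ℝ, 0 < T →
        ∀ ξ : ℝ → ℝ → ℝ, ContDiff ℝ (⊤ : ℕ∞) (Function.uncurry ξ) →
          Real.sqrt (∫ t in (0:ℝ)..T, ∫ x in (0:ℝ)..L,
              ((ξ t x) ^ 2 + (pdx ξ t x) ^ 2)) ≤ 1 / Real.sqrt C →
          ∀ v : ℝ → ℝ → ℝ, ContDiff ℝ (⊤ : ℕ∞) (Function.uncurry v) →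
            (∀ t ∈ Set.Ioo (0:ℝ) T, ∀ x ∈ Set.Ioo (0:ℝ) L,
              -pdt v t x - ξ t x * pdx v t x - pdx (pdx (pdx v)) t x = 0) →
            (∀ t ∈ Set.Icc (0:ℝ) T, v t 0 = 0 ∧ v t L = 0 ∧ pdx v t 0 = 0) →
            ∀ t ∈ Set.Icc (0:ℝ) T,
              (∫ x in (0:ℝ)..L, (v t x) ^ 2)
                + (∫ τ in (0:ℝ)..T, ∫ x in (0:ℝ)..L, (pdx v τ x) ^ 2) ≤
              C * ∫ x in (0:ℝ)..L, (v T x) ^ 2 := by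
  -- `(4 (1 + L))²` times the Sobolev constant, so that AM–GM with `K = 4 (1 + L)` absorbs the
  -- potential term.
  set C := 16 * (1 + L) ^ 2 * (1 + 1 / L)
  refine ⟨C, by positivity, fun T hT ξ hξ hξnorm v hv hPDE hbc t ht => ?_⟩
  have hsol : IsAdjointSolution T L ξ v := ⟨hξ, hv, hPDE, hbc⟩
  have := hv.continuous
  obtain ⟨t₀, ht₀, hmax⟩ := isCompact_Icc.exists_isMaxOn (nonempty_Icc.2 hT.le)
    (show Continuous fun s => ∫ x in 0..L, v s x ^ 2 by fun_prop).continuousOn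
  set M := ∫ x in 0..L, v t₀ x ^ 2
  have hM : 0 ≤ M := integral_nonneg hL.le fun _ _ => sq_nonneg _
  have hD : 0 ≤ ∫ x in 0..L, v T x ^ 2 := integral_nonneg hL.le fun _ _ => sq_nonneg _
  have hE₀ : 0 ≤ ∫ x in 0..L, v 0 x ^ 2 := integral_nonneg hL.le fun _ _ => sq_nonneg _
  have hG : 0 ≤ ∫ τ in t₀..T, ∫ x in 0..L, pdx v τ x ^ 2 :=
    integral_nonneg ht₀.2 fun τ _ => integral_nonneg hL.le fun _ _ => sq_nonneg _
  have hsmall := mul_le_mul_of_nonneg_right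
    (mul_le_one_of_sqrt_le_one_div_sqrt (by positivity) hξnorm) hM
  have hsource := two_mul_integral_integral_abs_mul_mul_le hξ hv hT.le hL (M := M)
    (K := 4 * (1 + L)) hmax
  have hmax_le := hsol.energy_add_integral_le hT hL ht₀
  have hdiss_le := hsol.energy_add_integral_le hT hL ⟨le_rfl, hT.le⟩
  have hEt : ∫ x in 0..L, v t x ^ 2 ≤ M := hmax ht
  have habsorb : 8 * (1 + L) * (∫ τ in 0..T, ∫ x in 0..L, |ξ τ x * (v τ x * pdx v τ x)|)
      ≤ M + ∫ τ in 0..T, ∫ x in 0..L, pdx v τ x ^ 2 := by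
    linarith
  have hC : 4 * (1 + L) * ∫ x in 0..L, v T x ^ 2 ≤ C * ∫ x in 0..L, v T x ^ 2 := by
    gcongr
    nlinarith [one_div_pos.2 hL]
  linarith
end

section
/- Let L > 0. For every w ∈ C²([0,L]) with w(0) = w(L) = 0, one has: ∫₀^L w'(x)² dx ≤ 4 ∫₀^L x² w''(x)² dx + 2L · w'(L)². -/
/-! Put `v = w'`. Since `(x v²)' = v² + 2 x v v'`, integrating gives `∫₀^L (v² + 2 x v v') = L v(L)²`,
and the integrand dominates `v²/2 - 2 x² v'²` because their difference is `(v + 2 x v')² / 2`. -/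

open intervalIntegral

theorem hasDerivAt_mul_sq {v : ℝ → ℝ} {x : ℝ} (hv : DifferentiableAt ℝ v x) :
    HasDerivAt (fun y => y * v y ^ 2) (v x ^ 2 + x * (2 * v x * deriv v x)) x := by
  have hsq : HasDerivAt (fun y => v y ^ 2) (2 * v x * deriv v x) x := by
    simpa using hv.hasDerivAt.fun_pow 2
  simpa using (hasDerivAt_id x).fun_mul hsq

theorem integral_sq_le_of_contDiff_one {v : ℝ → ℝ} (hv : ContDiff ℝ 1 v) {L : ℝ} (hL : 0 ≤ L) :
    ∫ x in (0:ℝ)..L, v x ^ 2 ≤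
      4 * (∫ x in (0:ℝ)..L, x ^ 2 * deriv v x ^ 2) + 2 * L * v L ^ 2 := by
  obtain ⟨hdiff, hv'⟩ := contDiff_one_iff_deriv.mp hv
  have hcont := hdiff.continuous
  have hftc : ∫ x in (0:ℝ)..L, (v x ^ 2 + x * (2 * v x * deriv v x)) = L * v L ^ 2 := by
    rw [integral_eq_sub_of_hasDerivAt (fun x _ => hasDerivAt_mul_sq (hdiff x))
      ((by fun_prop : Continuous _).intervalIntegrable 0 L)]
    ring
  have hmono : ∫ x in (0:ℝ)..L, (v x ^ 2 / 2 - 2 * (x ^ 2 * deriv v x ^ 2)) ≤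
      ∫ x in (0:ℝ)..L, (v x ^ 2 + x * (2 * v x * deriv v x)) :=
    integral_mono_on hL ((by fun_prop : Continuous _).intervalIntegrable 0 L)
      ((by fun_prop : Continuous _).intervalIntegrable 0 L)
      fun x _ => by nlinarith [sq_nonneg (v x + 2 * x * deriv v x)]
  rw [hftc, integral_sub ((by fun_prop : Continuous _).intervalIntegrable 0 L)
    ((by fun_prop : Continuous _).intervalIntegrable 0 L), integral_div,
    integral_const_mul] at hmono
  linarith

theorem stmt_8_general (L : ℝ) (hL : 0 < L) (w : ℝ → ℝ) (hw : ContDiff ℝ 2 w) :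
    (∫ x in (0:ℝ)..L, (deriv w x) ^ 2) ≤
      4 * (∫ x in (0:ℝ)..L, x ^ 2 * (deriv (deriv w) x) ^ 2) + 2 * L * (deriv w L) ^ 2 :=
  integral_sq_le_of_contDiff_one (hw.deriv' (n := 1)) hL.le

/-- For `L > 0` and `w ∈ C²([0,L])` with `w(0) = w(L) = 0`,
`∫₀^L w'(x)² dx ≤ 4 ∫₀^L x² w''(x)² dx + 2L · w'(L)²`. -/
theorem stmt_8 (L : ℝ) (hL : 0 < L) (w : ℝ → ℝ) (hw : ContDiff ℝ 2 w)
    (h0 : w 0 = 0) (hLval : w L = 0) :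
    (∫ x in (0:ℝ)..L, (deriv w x) ^ 2) ≤
      4 * (∫ x in (0:ℝ)..L, x ^ 2 * (deriv (deriv w) x) ^ 2) + 2 * L * (deriv w L) ^ 2 :=
  stmt_8_general L hL w hw
end

section
/- Let L > 0. There exists a constant C > 0 such that for every w ∈ C²([0,L]) with w(0) = w(L) = 0, one has: ∫₀^L w'(x)² dx ≤ C ∫₀^L x² w''(x)² dx. -/
/-!
Since `w 0 = w L = 0`, `v = w'` has mean zero on `[0, L]`, so `∫ v² ≤ ∫ (v L - v)²`.
The function `ψ = v L - v` vanishes at `L`, and for such `ψ` the Hardy-type inequality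
`∫ ψ² ≤ 4 ∫ x² ψ'²` follows by integrating `(x ψ²)' = ψ² + 2 x ψ ψ'` over `[0, L]`, where both
boundary terms vanish, and absorbing the cross term. Hence `C = 4` works.
-/

open intervalIntegral

theorem integral_sq_le_four_mul_integral_mul_sq_deriv {ψ : ℝ → ℝ} {L : ℝ} (hL : 0 ≤ L)
    (hψ : ContDiff ℝ 1 ψ) (hψL : ψ L = 0) :
    ∫ x in (0:ℝ)..L, ψ x ^ 2 ≤ 4 * ∫ x in (0:ℝ)..L, x ^ 2 * deriv ψ x ^ 2 := by
  have hψc : Continuous ψ := hψ.continuous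
  have hψ'c : Continuous (deriv ψ) := hψ.continuous_deriv le_rfl
  have hderiv (x : ℝ) : HasDerivAt (fun y => y * ψ y ^ 2)
      (ψ x ^ 2 + 2 * x * ψ x * deriv ψ x) x := by
    refine ((hasDerivAt_id' x).fun_mul
      ((hψ.differentiable one_ne_zero x).hasDerivAt.fun_pow 2)).congr_deriv ?_
    push_cast
    ring
  have hboundary : ∫ x in (0:ℝ)..L, (ψ x ^ 2 + 2 * x * ψ x * deriv ψ x) = 0 := by
    rw [integral_eq_sub_of_hasDerivAt (fun x _ => hderiv x)
      (Continuous.intervalIntegrable (by fun_prop) _ _)]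
    simp [hψL]
  -- `ψ² + 2xψψ' = ½(ψ + 2xψ')² + ½ψ² - 2x²ψ'²`
  have hlower : ∫ x in (0:ℝ)..L, ((1/2) * ψ x ^ 2 - 2 * (x ^ 2 * deriv ψ x ^ 2)) ≤
      ∫ x in (0:ℝ)..L, (ψ x ^ 2 + 2 * x * ψ x * deriv ψ x) :=
    integral_mono_on hL (Continuous.intervalIntegrable (by fun_prop) _ _)
      (Continuous.intervalIntegrable (by fun_prop) _ _) fun x _ => by
        nlinarith [sq_nonneg (ψ x + 2 * x * deriv ψ x)]
  rw [hboundary, integral_sub (Continuous.intervalIntegrable (by fun_prop) _ _)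
    (Continuous.intervalIntegrable (by fun_prop) _ _), integral_const_mul,
    integral_const_mul] at hlower
  linarith

theorem integral_sq_le_integral_sq_const_sub {v : ℝ → ℝ} {a b : ℝ} (hab : a ≤ b)
    (hv : Continuous v) (hv0 : ∫ x in a..b, v x = 0) (c : ℝ) :
    ∫ x in a..b, v x ^ 2 ≤ ∫ x in a..b, (c - v x) ^ 2 := by
  simp_rw [sub_sq]
  rw [integral_add (Continuous.intervalIntegrable (by fun_prop) _ _)
      (Continuous.intervalIntegrable (by fun_prop) _ _),
    integral_sub (Continuous.intervalIntegrable (by fun_prop) _ _)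
      (Continuous.intervalIntegrable (by fun_prop) _ _),
    integral_const, integral_const_mul, hv0, smul_eq_mul]
  nlinarith [mul_nonneg (sub_nonneg.2 hab) (sq_nonneg c)]

/-- For `L > 0` there is `C > 0` such that for every `w ∈ C²([0,L])`
with `w(0) = w(L) = 0`, `∫₀^L w'(x)² dx ≤ C ∫₀^L x² w''(x)² dx`. -/
theorem stmt_9 (L : ℝ) (hL : 0 < L) :
    ∃ C : ℝ, 0 < C ∧ ∀ w : ℝ → ℝ, ContDiff ℝ 2 w → w 0 = 0 → w L = 0 →
      (∫ x in (0:ℝ)..L, (deriv w x) ^ 2) ≤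
        C * ∫ x in (0:ℝ)..L, x ^ 2 * (deriv (deriv w) x) ^ 2 := by
  refine ⟨4, by norm_num, fun w hw hw0 hwL => ?_⟩
  have hw' : ContDiff ℝ 1 (deriv w) := hw.iterate_deriv' 1 1
  have hmean : ∫ x in (0:ℝ)..L, deriv w x = 0 := by
    rw [integral_deriv_eq_sub (fun x _ => (hw.differentiable (by norm_num)).differentiableAt)
      (hw'.continuous.intervalIntegrable _ _), hw0, hwL, sub_zero]
  have hderiv : deriv (fun x => deriv w L - deriv w x) = fun x => -deriv (deriv w) x := by
    ext x; simp
  calc ∫ x in (0:ℝ)..L, deriv w x ^ 2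
      ≤ ∫ x in (0:ℝ)..L, (deriv w L - deriv w x) ^ 2 :=
        integral_sq_le_integral_sq_const_sub hL.le hw'.continuous hmean _
    _ ≤ 4 * ∫ x in (0:ℝ)..L, x ^ 2 * deriv (deriv w) x ^ 2 := by
        simpa [hderiv] using integral_sq_le_four_mul_integral_mul_sq_deriv hL.le
          (contDiff_const.sub hw') (sub_self _)
end

section
/- Let L > 0. For every w ∈ C^∞ compactly supported in the open interval (0,L), one has the identity: ∫₀^L w'(x) ( w''(x)/(L−x) + 2 w'(x)/(L−x)² + 2 w(x)/(L−x)³ + w(x)/(L−x) ) dx = (3/2) ∫₀^L w'(x)²/(L−x)² dx − 3 ∫₀^L w(x)²/(L−x)⁴ dx − (1/2) ∫₀^L w(x)²/(L−x)² dx. -/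
open Filter Topology MeasureTheory

/-! The left integrand differs from the right one by an exact derivative: away from `L`,
`F = (w'² + w²) / (2 (L - x)) + w² / (L - x)³` (`kdvPrimitive L w w'`) has derivative
`w' (w'' / (L - x) + 2 w' / (L - x)² + 2 w / (L - x)³ + w / (L - x))
  - (3/2 w'² / (L - x)² - 3 w² / (L - x)⁴ - 1/2 w² / (L - x)²)`.
Since `w` vanishes near `0` and near `L`, so does `F`, every quotient by a power of `L - x` is
continuous on `[0, L]`, and the fundamental theorem of calculus gives the identity. -/

theorem continuous_of_continuousAt_ne_of_eventuallyEq {X Y : Type*} [TopologicalSpace X]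
    [TopologicalSpace Y] {f : X → Y} {a : X} {c : Y} (hf : ∀ x ≠ a, ContinuousAt f x)
    (ha : f =ᶠ[𝓝 a] fun _ => c) : Continuous f :=
  continuous_iff_continuousAt.2 fun x => by
    by_cases hx : x = a
    · exact hx ▸ continuousAt_const.congr ha.symm
    · exact hf x hx

noncomputable def kdvPrimitive (L : ℝ) (w u : ℝ → ℝ) (y : ℝ) : ℝ :=
  (u y ^ 2 + w y ^ 2) / (2 * (L - y)) + w y ^ 2 / (L - y) ^ 3

theorem hasDerivAt_kdvPrimitive {w u : ℝ → ℝ} {L x u' : ℝ} (hw : HasDerivAt w (u x) x)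
    (hu : HasDerivAt u u' x) (hL : ∀ᶠ y in 𝓝 L, w y = 0 ∧ u y = 0) :
    HasDerivAt (kdvPrimitive L w u)
      (u x * (u' / (L - x) + 2 * u x / (L - x) ^ 2 + 2 * w x / (L - x) ^ 3 + w x / (L - x))
        - (3 / 2 * (u x ^ 2 / (L - x) ^ 2) - 3 * (w x ^ 2 / (L - x) ^ 4)
          - 1 / 2 * (w x ^ 2 / (L - x) ^ 2))) x := by
  by_cases hx : x = L
  · -- at `L` the derivative is `0`: `u L = 0`, and the other quotients divide by `0`
    subst hx
    have hF : kdvPrimitive x w u =ᶠ[𝓝 x] fun _ => 0 :=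
      hL.mono fun y ⟨hwy, huy⟩ => by simp [kdvPrimitive, hwy, huy]
    simpa [hL.self_of_nhds.2] using (hasDerivAt_const x (0 : ℝ)).congr_of_eventuallyEq hF
  have hLx : L - x ≠ 0 := sub_ne_zero.2 (Ne.symm hx)
  have hd : HasDerivAt (fun y => L - y) (-1) x := (hasDerivAt_id x).const_sub L
  refine ((((hu.fun_pow 2).fun_add (hw.fun_pow 2)).div (hd.const_mul 2)
    (mul_ne_zero two_ne_zero hLx)).add
    ((hw.fun_pow 2).div (hd.fun_pow 3) (pow_ne_zero 3 hLx))).congr_deriv ?_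
  field_simp
  ring

theorem stmt_11_general (L : ℝ) (w : ℝ → ℝ) (hw : ContDiff ℝ (⊤ : ℕ∞) w)
    (hsupp : tsupport w ⊆ Set.Ioo 0 L) :
    (∫ x in (0:ℝ)..L, deriv w x *
        (deriv (deriv w) x / (L - x) + 2 * deriv w x / (L - x) ^ 2
          + 2 * w x / (L - x) ^ 3 + w x / (L - x))) =
      (3 / 2) * (∫ x in (0:ℝ)..L, (deriv w x) ^ 2 / (L - x) ^ 2)
        - 3 * (∫ x in (0:ℝ)..L, (w x) ^ 2 / (L - x) ^ 4)
        - (1 / 2) * ∫ x in (0:ℝ)..L, (w x) ^ 2 / (L - x) ^ 2 := by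
  have hw' : ContDiff ℝ (⊤ : ℕ∞) (deriv w) := (contDiff_infty_iff_deriv.1 hw).2
  have hc := hw.continuous
  have hc' := hw'.continuous
  have hc'' := (contDiff_infty_iff_deriv.1 hw').2.continuous
  have hvanish : ∀ f : ℝ → ℝ, tsupport f ⊆ tsupport w → ∀ᶠ y in 𝓝 L, f y = 0 := fun f hf =>
    notMem_tsupport_iff_eventuallyEq.1 fun h => (hsupp (hf h)).2.false
  have hzero : ∀ᶠ y in 𝓝 L, w y = 0 ∧ deriv w y = 0 ∧ deriv (deriv w) y = 0 :=
    (hvanish w subset_rfl).and ((hvanish _ tsupport_deriv_subset).and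
      (hvanish _ (tsupport_deriv_subset.trans tsupport_deriv_subset)))
  have hintegrable : ∀ f : ℝ → ℝ, (∀ x ≠ L, ContinuousAt f x) →
      (∀ y, w y = 0 → deriv w y = 0 → deriv (deriv w) y = 0 → f y = 0) →
      IntervalIntegrable f volume 0 L := fun f hf hf0 =>
    (continuous_of_continuousAt_ne_of_eventuallyEq hf
      (hzero.mono fun y ⟨h1, h2, h3⟩ => hf0 y h1 h2 h3)).intervalIntegrable 0 L
  have hw0 : w 0 = 0 ∧ deriv w 0 = 0 := by
    have h0 : (0 : ℝ) ∉ tsupport w := fun h => (hsupp h).1.false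
    exact ⟨image_eq_zero_of_notMem_tsupport h0,
      image_eq_zero_of_notMem_tsupport fun h => h0 (tsupport_deriv_subset h)⟩
  rw [← sub_eq_zero, ← intervalIntegral.integral_const_mul, ← intervalIntegral.integral_const_mul,
    ← intervalIntegral.integral_const_mul, ← intervalIntegral.integral_sub,
    ← intervalIntegral.integral_sub, ← intervalIntegral.integral_sub,
    intervalIntegral.integral_eq_sub_of_hasDerivAt fun x _ => hasDerivAt_kdvPrimitive
      (hw.differentiable (by simp) x).hasDerivAt (hw'.differentiable (by simp) x).hasDerivAt
      (hzero.mono fun y hy => ⟨hy.1, hy.2.1⟩)]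
  · simp [kdvPrimitive, hw0]
  all_goals refine hintegrable _ (fun x hx => ?_) fun y h1 h2 h3 => by simp [h1, h2, h3]
  all_goals have := sub_ne_zero.2 (Ne.symm hx); fun_prop (disch := positivity)

/-- For `L > 0` and `w ∈ C^∞` compactly supported in `(0,L)`,
the quadratic form identity
`∫₀^L w'( w''/(L−x) + 2w'/(L−x)² + 2w/(L−x)³ + w/(L−x) ) dx
  = (3/2)∫₀^L w'²/(L−x)² dx − 3∫₀^L w²/(L−x)⁴ dx − (1/2)∫₀^L w²/(L−x)² dx`. -/
theorem stmt_11 (L : ℝ) (hL : 0 < L) (w : ℝ → ℝ) (hw : ContDiff ℝ (⊤ : ℕ∞) w)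
    (hsupp : tsupport w ⊆ Set.Ioo 0 L) :
    (∫ x in (0:ℝ)..L, deriv w x *
        (deriv (deriv w) x / (L - x) + 2 * deriv w x / (L - x) ^ 2
          + 2 * w x / (L - x) ^ 3 + w x / (L - x))) =
      (3 / 2) * (∫ x in (0:ℝ)..L, (deriv w x) ^ 2 / (L - x) ^ 2)
        - 3 * (∫ x in (0:ℝ)..L, (w x) ^ 2 / (L - x) ^ 4)
        - (1 / 2) * ∫ x in (0:ℝ)..L, (w x) ^ 2 / (L - x) ^ 2 :=
  stmt_11_general L w hw hsupp
end

section
/- (Coercivity of the KdV quadratic form in the weighted space.) Let L > 0 and define, for w ∈ C^∞ compactly supported in (0,L), a(w,w) := ∫₀^L w'(x) ( w''(x)/(L−x) + 2 w'(x)/(L−x)² + 2 w(x)/(L−x)³ + w(x)/(L−x) ) dx. Then for every ε ∈ (0, 1/3) and every w ∈ C^∞ compactly supported in (0,L): a(w,w) + (L/(18ε)) ∫₀^L w(x)²/(L−x) dx ≥ (1/6 − ε/2) ∫₀^L w'(x)²/(L−x)² dx. -/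
/-!
Integrating by parts, `a(w,w) = (3/2) ∫ w'²/(L-x)² - 3 ∫ w²/(L-x)⁴ - (1/2) ∫ w²/(L-x)²`.
The weighted Hardy inequality `(9/4) ∫ w²/(L-x)⁴ ≤ ∫ w'²/(L-x)²`, obtained by expanding
`0 ≤ ∫ (w' + (3/2) w/(L-x))²/(L-x)²`, controls the middle term. For the last one, AM-GM gives
`w²/(L-x)² ≤ δ w²/(L-x)⁴ + L/(4δ) · w²/(L-x)` on `(0,L)`; with `δ = 9ε/4` the Hardy inequality turns
the first part into `(ε/2) ∫ w'²/(L-x)²`.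
-/

open MeasureTheory Set Filter Topology

lemma continuous_div_sub_pow {g : ℝ → ℝ} {b : ℝ} (hg : Continuous g) (hb : g =ᶠ[𝓝 b] 0)
    (k : ℕ) : Continuous fun x => g x / (b - x) ^ k := by
  refine continuous_iff_continuousAt.2 fun x => ?_
  rcases eq_or_ne x b with rfl | hx
  · have hzero : (fun y => g y / (x - y) ^ k) =ᶠ[𝓝 x] fun _ => 0 :=
      hb.mono fun y hy => by simp [hy]
    exact continuousAt_const.congr hzero.symm
  · exact hg.continuousAt.div (by fun_prop) (pow_ne_zero _ (sub_ne_zero.2 hx.symm))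

lemma intervalIntegrable_div_sub_pow {g : ℝ → ℝ} {b : ℝ} (hg : Continuous g)
    (hb : g =ᶠ[𝓝 b] 0) (k : ℕ) (a c : ℝ) :
    IntervalIntegrable (fun x => g x / (b - x) ^ k) volume a c :=
  (continuous_div_sub_pow hg hb k).intervalIntegrable a c

lemma hasDerivAt_sq_div_sub_pow {f : ℝ → ℝ} {f' b x : ℝ} (hf : HasDerivAt f f' x) (hx : x < b)
    (n : ℕ) : HasDerivAt (fun y => f y ^ 2 / (b - y) ^ (n + 1))
      (2 * (f x * f' / (b - x) ^ (n + 1)) + (n + 1) * (f x ^ 2 / (b - x) ^ (n + 2))) x := by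
  have hne : b - x ≠ 0 := sub_ne_zero.2 hx.ne'
  have hden : HasDerivAt (fun y => (b - y) ^ (n + 1)) ((n + 1) * (b - x) ^ n * (-1)) x := by
    simpa using ((hasDerivAt_id x).const_sub b).fun_pow (n + 1)
  refine ((hf.fun_pow 2).fun_div hden (pow_ne_zero _ hne)).congr_deriv ?_
  field_simp
  ring

lemma integral_mul_deriv_div_sub_pow {f : ℝ → ℝ} {a b : ℝ} (hf : ContDiff ℝ 1 f)
    (ha : f a = 0) (hb : f =ᶠ[𝓝 b] 0) (hab : a ≤ b) (n : ℕ) :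
    ∫ x in a..b, f x * deriv f x / (b - x) ^ (n + 1)
      = -((n + 1) / 2) * ∫ x in a..b, f x ^ 2 / (b - x) ^ (n + 2) := by
  have hsq : (fun x => f x ^ 2) =ᶠ[𝓝 b] 0 := hb.mono fun x hx => by simp [hx]
  have hprod : (fun x => f x * deriv f x) =ᶠ[𝓝 b] 0 := hb.mono fun x hx => by simp [hx]
  have hcf : Continuous f := hf.continuous
  have hcf' : Continuous (deriv f) := hf.continuous_deriv_one
  have hI := intervalIntegrable_div_sub_pow (g := fun x => f x * deriv f x)
    (hcf.mul hcf') hprod (n + 1) a b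
  have hJ := intervalIntegrable_div_sub_pow (g := fun x => f x ^ 2) (hcf.pow 2) hsq (n + 2) a b
  have hftc := intervalIntegral.integral_eq_sub_of_hasDerivAt_of_le hab
    (continuous_div_sub_pow (g := fun x => f x ^ 2) (hcf.pow 2) hsq (n + 1)).continuousOn
    (fun x hx => hasDerivAt_sq_div_sub_pow ((hf.differentiable one_ne_zero x).hasDerivAt) hx.2 n)
    ((hI.const_mul 2).add (hJ.const_mul _))
  rw [intervalIntegral.integral_add (hI.const_mul 2) (hJ.const_mul _),
    intervalIntegral.integral_const_mul, intervalIntegral.integral_const_mul] at hftc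
  simp only [ha, hb.eq_of_nhds, Pi.zero_apply, zero_pow two_ne_zero, zero_div, sub_zero] at hftc
  linarith

lemma integral_sq_div_sub_pow_le {f : ℝ → ℝ} {a b : ℝ} (hf : ContDiff ℝ 1 f)
    (ha : f a = 0) (hb : f =ᶠ[𝓝 b] 0) (hab : a ≤ b) (n : ℕ) :
    ((n + 1) / 2) ^ 2 * ∫ x in a..b, f x ^ 2 / (b - x) ^ (n + 2)
      ≤ ∫ x in a..b, deriv f x ^ 2 / (b - x) ^ n := by
  set t : ℝ := (n + 1) / 2
  have hexpand : ∀ x ∈ Icc a b, 0 ≤ deriv f x ^ 2 / (b - x) ^ n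
      + 2 * t * (f x * deriv f x / (b - x) ^ (n + 1)) + t ^ 2 * (f x ^ 2 / (b - x) ^ (n + 2)) := by
    intro x hx
    rcases (sub_nonneg.2 hx.2).eq_or_lt with hbx | hbx
    · rw [← hbx]
      simp only [ne_eq, Nat.add_eq_zero_iff, one_ne_zero, and_false, not_false_eq_true, zero_pow,
        div_zero, mul_zero, add_zero, OfNat.ofNat_ne_zero]
      positivity
    · have hsq : deriv f x ^ 2 / (b - x) ^ n + 2 * t * (f x * deriv f x / (b - x) ^ (n + 1))
          + t ^ 2 * (f x ^ 2 / (b - x) ^ (n + 2))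
          = (deriv f x + t * f x / (b - x)) ^ 2 / (b - x) ^ n := by
        field_simp
        ring
      rw [hsq]
      positivity
  have hprod : (fun x => f x * deriv f x) =ᶠ[𝓝 b] 0 := hb.mono fun x hx => by simp [hx]
  have hsq : (fun x => f x ^ 2) =ᶠ[𝓝 b] 0 := hb.mono fun x hx => by simp [hx]
  have hsq' : (fun x => deriv f x ^ 2) =ᶠ[𝓝 b] 0 := hb.deriv.mono fun x hx => by simp [hx]
  have hcf : Continuous f := hf.continuous
  have hcf' : Continuous (deriv f) := hf.continuous_deriv_one
  have hB := intervalIntegrable_div_sub_pow (g := fun x => deriv f x ^ 2) (hcf'.pow 2) hsq' n a b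
  have hI := intervalIntegrable_div_sub_pow (g := fun x => f x * deriv f x)
    (hcf.mul hcf') hprod (n + 1) a b
  have hC := intervalIntegrable_div_sub_pow (g := fun x => f x ^ 2) (hcf.pow 2) hsq (n + 2) a b
  have hnonneg := intervalIntegral.integral_nonneg (μ := volume) hab hexpand
  rw [intervalIntegral.integral_add (hB.add (hI.const_mul _)) (hC.const_mul _),
    intervalIntegral.integral_add hB (hI.const_mul _), intervalIntegral.integral_const_mul,
    intervalIntegral.integral_const_mul, integral_mul_deriv_div_sub_pow hf ha hb hab n] at hnonneg
  linear_combination hnonneg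

lemma sq_div_sq_le {q y ℓ δ : ℝ} (hy : 0 ≤ y) (hyℓ : y ≤ ℓ) (hδ : 0 < δ) :
    q ^ 2 / y ^ 2 ≤ δ * (q ^ 2 / y ^ 4) + ℓ / (4 * δ) * (q ^ 2 / y) := by
  rcases hy.eq_or_lt with rfl | hy
  · simp
  have hamgm : q ^ 2 / y ^ 2 ≤ δ * (q ^ 2 / y ^ 4) + q ^ 2 / (4 * δ) := by
    have hgap : δ * (q ^ 2 / y ^ 4) + q ^ 2 / (4 * δ) - q ^ 2 / y ^ 2
        = (2 * δ * (q / y ^ 2) - q) ^ 2 / (4 * δ) := by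
      field_simp
      ring
    have : 0 ≤ (2 * δ * (q / y ^ 2) - q) ^ 2 / (4 * δ) := by positivity
    linarith
  have hweight : q ^ 2 / (4 * δ) ≤ ℓ / (4 * δ) * (q ^ 2 / y) := by
    calc q ^ 2 / (4 * δ) = q ^ 2 / (4 * δ) * 1 := (mul_one _).symm
      _ ≤ q ^ 2 / (4 * δ) * (ℓ / y) :=
        mul_le_mul_of_nonneg_left ((one_le_div hy).2 hyℓ) (by positivity)
      _ = ℓ / (4 * δ) * (q ^ 2 / y) := by ring
  linarith

lemma integral_sq_div_sq_le {f : ℝ → ℝ} {a b δ : ℝ} (hf : Continuous f) (hb : f =ᶠ[𝓝 b] 0)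
    (hab : a ≤ b) (hδ : 0 < δ) :
    ∫ x in a..b, f x ^ 2 / (b - x) ^ 2
      ≤ δ * (∫ x in a..b, f x ^ 2 / (b - x) ^ 4)
        + (b - a) / (4 * δ) * ∫ x in a..b, f x ^ 2 / (b - x) := by
  have hsq : (fun x => f x ^ 2) =ᶠ[𝓝 b] 0 := hb.mono fun x hx => by simp [hx]
  have hint (k : ℕ) := intervalIntegrable_div_sub_pow (g := fun x => f x ^ 2) (hf.pow 2) hsq k a b
  have hA : IntervalIntegrable (fun x => f x ^ 2 / (b - x)) volume a b := by
    simpa using hint 1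
  rw [← intervalIntegral.integral_const_mul, ← intervalIntegral.integral_const_mul,
    ← intervalIntegral.integral_add ((hint 4).const_mul _) (hA.const_mul _)]
  refine intervalIntegral.integral_mono_on hab (hint 2)
    (((hint 4).const_mul _).add (hA.const_mul _)) fun x hx => ?_
  exact sq_div_sq_le (sub_nonneg.2 hx.2) (by linarith [hx.1]) hδ

lemma integral_kdv_form_eq {w : ℝ → ℝ} {a b : ℝ} (hw : ContDiff ℝ 2 w) (ha : w =ᶠ[𝓝 a] 0)
    (hb : w =ᶠ[𝓝 b] 0) (hab : a ≤ b) :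
    ∫ x in a..b, deriv w x *
        (deriv (deriv w) x / (b - x) + 2 * deriv w x / (b - x) ^ 2
          + 2 * w x / (b - x) ^ 3 + w x / (b - x))
      = 3 / 2 * (∫ x in a..b, deriv w x ^ 2 / (b - x) ^ 2)
        - 3 * (∫ x in a..b, w x ^ 2 / (b - x) ^ 4)
        - 1 / 2 * ∫ x in a..b, w x ^ 2 / (b - x) ^ 2 := by
  have hw1 : ContDiff ℝ 1 w := hw.of_le one_le_two
  have hcw : Continuous w := hw.continuous
  have hcw' : Continuous (deriv w) := hw1.continuous_deriv_one
  have hcw'' : Continuous (deriv (deriv w)) := hw.deriv'.continuous_deriv_one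
  have hww' : (fun x => w x * deriv w x) =ᶠ[𝓝 b] 0 := hb.mono fun x hx => by simp [hx]
  have ha' : deriv w =ᶠ[𝓝 a] 0 := by simpa using ha.deriv
  have hb' : deriv w =ᶠ[𝓝 b] 0 := by simpa using hb.deriv
  have hw'w'' : (fun x => deriv w x * deriv (deriv w) x) =ᶠ[𝓝 b] 0 :=
    hb'.mono fun x hx => by simp [hx]
  have hw'2 : (fun x => deriv w x ^ 2) =ᶠ[𝓝 b] 0 := hb'.mono fun x hx => by simp [hx]
  have i1 : IntervalIntegrable (fun x => deriv w x * deriv (deriv w) x / (b - x)) volume a b := by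
    simpa using intervalIntegrable_div_sub_pow (hcw'.mul hcw'') hw'w'' 1 a b
  have i2 := intervalIntegrable_div_sub_pow (g := fun x => deriv w x ^ 2) (hcw'.pow 2) hw'2 2 a b
  have i3 := intervalIntegrable_div_sub_pow (g := fun x => w x * deriv w x)
    (hcw.mul hcw') hww' 3 a b
  have i4 : IntervalIntegrable (fun x => w x * deriv w x / (b - x)) volume a b := by
    simpa using intervalIntegrable_div_sub_pow (hcw.mul hcw') hww' 1 a b
  have ibp1 := integral_mul_deriv_div_sub_pow hw.deriv' ha'.eq_of_nhds hb' hab 0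
  have ibp3 := integral_mul_deriv_div_sub_pow hw1 ha.eq_of_nhds hb hab 2
  have ibp4 := integral_mul_deriv_div_sub_pow hw1 ha.eq_of_nhds hb hab 0
  norm_num at ibp1 ibp3 ibp4
  calc _ = ∫ x in a..b, deriv w x * deriv (deriv w) x / (b - x)
          + 2 * (deriv w x ^ 2 / (b - x) ^ 2) + 2 * (w x * deriv w x / (b - x) ^ 3)
          + w x * deriv w x / (b - x) :=
        intervalIntegral.integral_congr fun x _ => by ring
    _ = 3 / 2 * (∫ x in a..b, deriv w x ^ 2 / (b - x) ^ 2)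
        - 3 * (∫ x in a..b, w x ^ 2 / (b - x) ^ 4)
        - 1 / 2 * ∫ x in a..b, w x ^ 2 / (b - x) ^ 2 := by
      rw [intervalIntegral.integral_add ((i1.add (i2.const_mul 2)).add (i3.const_mul 2)) i4,
        intervalIntegral.integral_add (i1.add (i2.const_mul 2)) (i3.const_mul 2),
        intervalIntegral.integral_add i1 (i2.const_mul 2), intervalIntegral.integral_const_mul,
        intervalIntegral.integral_const_mul, ibp1, ibp3, ibp4]
      ring

/-- Coercivity of the KdV quadratic form in the weighted space:
for `L > 0`, every `ε ∈ (0,1/3)` and every `w ∈ C^∞` compactly supported in `(0,L)`,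
`a(w,w) + (L/(18ε)) ∫₀^L w²/(L−x) dx ≥ (1/6 − ε/2) ∫₀^L w'²/(L−x)² dx`,
where `a(w,w) = ∫₀^L w'( w''/(L−x) + 2w'/(L−x)² + 2w/(L−x)³ + w/(L−x) ) dx`. -/
theorem stmt_12 (L : ℝ) (hL : 0 < L) (ε : ℝ) (hε : ε ∈ Set.Ioo (0:ℝ) (1/3))
    (w : ℝ → ℝ) (hw : ContDiff ℝ (⊤ : ℕ∞) w) (hsupp : tsupport w ⊆ Set.Ioo 0 L) :
    (∫ x in (0:ℝ)..L, deriv w x *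
        (deriv (deriv w) x / (L - x) + 2 * deriv w x / (L - x) ^ 2
          + 2 * w x / (L - x) ^ 3 + w x / (L - x)))
      + (L / (18 * ε)) * (∫ x in (0:ℝ)..L, (w x) ^ 2 / (L - x)) ≥
      (1 / 6 - ε / 2) * ∫ x in (0:ℝ)..L, (deriv w x) ^ 2 / (L - x) ^ 2 := by
  have hw2 : ContDiff ℝ 2 w := hw.of_le (WithTop.coe_le_coe.2 le_top)
  have h0 : w =ᶠ[𝓝 0] 0 := notMem_tsupport_iff_eventuallyEq.1 fun h => (hsupp h).1.false
  have hL' : w =ᶠ[𝓝 L] 0 := notMem_tsupport_iff_eventuallyEq.1 fun h => (hsupp h).2.false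
  have hhardy := integral_sq_div_sub_pow_le (hw2.of_le one_le_two) h0.eq_of_nhds hL' hL.le 2
  have hcross := integral_sq_div_sq_le hw.continuous hL' hL.le (δ := 9 * ε / 4) (by linarith [hε.1])
  have hK : (L - 0) / (4 * (9 * ε / 4)) = 2 * (L / (18 * ε)) := by
    field_simp
    ring
  rw [hK] at hcross
  norm_num at hhardy
  have hslack := mul_nonneg (by linarith [hε.1] : (0 : ℝ) ≤ 4 / 3 + ε / 2) (sub_nonneg.2 hhardy)
  rw [integral_kdv_form_eq hw2 h0 hL' hL.le]
  linarith
end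

section
/- (Dissipativity identity for the KdV operator in the weighted space.) Let L > 0. For every w ∈ C³([0,L]) with w(0) = w(L) = 0 and w'(L) = 0, one has the identity: ∫₀^L ( −w'''(x) − w'(x) ) · w(x)/(L−x) dx = −(3/2) ∫₀^L w'(x)²/(L−x)² dx + 3 ∫₀^L w(x)²/(L−x)⁴ dx + (1/2) ∫₀^L w(x)²/(L−x)² dx − w'(0)²/(2L). (All integrals converge since w(L) = w'(L) = 0 forces w(x) = O((L−x)²) and w'(x) = O(L−x) near x = L.) -/
open MeasureTheory Set Filter Topology intervalIntegral

/-!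
Repeated integration by parts shows that, away from `x = L`, the difference of the two
integrands is the derivative of an explicit flux `G = kdvFlux L w w' w''`, built from
`w, w', w''` and powers of `1 / (L - x)`. Since `w(L) = w'(L) = 0`, Taylor's bound gives
`w = O((L - x)²)` and `w' = O(L - x)`, so every weighted integrand is bounded on `[0, L]`
and `G = O(L - x)` extends continuously by `G(L) = 0`. The fundamental theorem of calculus
then leaves only `-G(0) = -w'(0)² / (2L)`.
-/

lemma abs_le_mul_sub_of_abs_deriv_le {f : ℝ → ℝ} {x b C : ℝ} (hf : Differentiable ℝ f)
    (hb : f b = 0) (hxb : x ≤ b) (hC : ∀ t ∈ Icc x b, |deriv f t| ≤ C) :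
    |f x| ≤ C * (b - x) := by
  have := (convex_Icc x b).norm_image_sub_le_of_norm_deriv_le (fun t _ => hf t) hC
    (left_mem_Icc.2 hxb) (right_mem_Icc.2 hxb)
  rwa [hb, zero_sub, norm_neg, Real.norm_eq_abs, Real.norm_eq_abs,
    abs_of_nonneg (sub_nonneg.2 hxb)] at this

lemma abs_le_mul_sub_sq_of_abs_deriv_le {f : ℝ → ℝ} {a b M : ℝ} (hM : 0 ≤ M)
    (hf : Differentiable ℝ f) (hb : f b = 0) (hf' : ∀ x ∈ Icc a b, |deriv f x| ≤ M * (b - x))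
    {x : ℝ} (hx : x ∈ Icc a b) :
    |f x| ≤ M * (b - x) ^ 2 := by
  have := abs_le_mul_sub_of_abs_deriv_le (C := M * (b - x)) hf hb hx.2
    fun t ht => (hf' t ⟨hx.1.trans ht.1, ht.2⟩).trans (by gcongr; exact ht.1)
  rwa [mul_assoc, ← sq] at this

lemma abs_div_le_of_abs_le_mul {a d M : ℝ} (hd : 0 ≤ d) (hM : 0 ≤ M) (h : |a| ≤ M * d) :
    |a / d| ≤ M := by
  rw [abs_div, abs_of_nonneg hd]
  exact div_le_of_le_mul₀ hd hM h

lemma intervalIntegrable_div_pow_of_abs_le {f : ℝ → ℝ} {a b M : ℝ} (n : ℕ) (hab : a ≤ b)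
    (hf : Measurable f) (hM : 0 ≤ M) (h : ∀ x ∈ Icc a b, |f x| ≤ M * (b - x) ^ n) :
    IntervalIntegrable (fun x => f x / (b - x) ^ n) volume a b := by
  refine (intervalIntegrable_const (c := M)).mono_fun' (hf.div (by fun_prop)).aestronglyMeasurable
    ((ae_restrict_iff' measurableSet_uIoc).2 (ae_of_all _ fun x hx => ?_))
  rw [uIoc_of_le hab] at hx
  exact abs_div_le_of_abs_le_mul (pow_nonneg (sub_nonneg.2 hx.2) n) hM
    (h x (Ioc_subset_Icc_self hx))

lemma intervalIntegrable_sq_div_pow_of_abs_le {f : ℝ → ℝ} {a b M : ℝ} (n : ℕ) (hab : a ≤ b)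
    (hf : Measurable f) (h : ∀ x ∈ Icc a b, |f x| ≤ M * (b - x) ^ n) :
    IntervalIntegrable (fun x => f x ^ 2 / (b - x) ^ (2 * n)) volume a b :=
  intervalIntegrable_div_pow_of_abs_le _ hab (hf.pow_const 2) (sq_nonneg M) fun x hx => by
    rw [abs_pow, pow_mul', ← mul_pow]
    exact pow_le_pow_left₀ (abs_nonneg _) (h x hx) 2

section KdVFlux

variable {L M x : ℝ} {w w₁ w₂ w₃ : ℝ → ℝ}

/-- Integrating `∫ (-w''' - w') w / (L - x)` by parts until only the weighted integrals of
`w'²` and `w²` remain produces this boundary term; `w₁, w₂` play the roles of `w', w''`. -/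
noncomputable def kdvFlux (L : ℝ) (w w₁ w₂ : ℝ → ℝ) (x : ℝ) : ℝ :=
  (-(w₂ x * w x) + w₁ x ^ 2 / 2 - w x ^ 2 / 2) / (L - x) + w₁ x * w x / (L - x) ^ 2
    - w x ^ 2 / (L - x) ^ 3

lemma hasDerivAt_kdvFlux (hw : HasDerivAt w (w₁ x) x) (hw₁ : HasDerivAt w₁ (w₂ x) x)
    (hw₂ : HasDerivAt w₂ (w₃ x) x) (hx : x ≠ L) :
    HasDerivAt (kdvFlux L w w₁ w₂)
      ((-w₃ x - w₁ x) * (w x / (L - x)) - (-(3 / 2) * (w₁ x ^ 2 / (L - x) ^ 2)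
        + 3 * (w x ^ 2 / (L - x) ^ 4) + 1 / 2 * (w x ^ 2 / (L - x) ^ 2))) x := by
  have hd : L - x ≠ 0 := sub_ne_zero.2 hx.symm
  have hd' : HasDerivAt (fun y => L - y) (-1) x := by
    simpa using (hasDerivAt_id x).const_sub L
  have := ((((hw₂.mul hw).neg.add ((hw₁.pow 2).div_const 2)).sub
    ((hw.pow 2).div_const 2)).div hd' hd).add ((hw₁.mul hw).div (hd'.pow 2) (pow_ne_zero 2 hd))
    |>.sub ((hw.pow 2).div (hd'.pow 3) (pow_ne_zero 3 hd))
  refine this.congr_deriv ?_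
  simp only [Pi.mul_apply, Pi.pow_apply, Pi.add_apply, Pi.sub_apply, Pi.neg_apply]
  field_simp
  ring

-- Lean's `x / 0 = 0` makes this the value of the continuous extension of the flux at `L`.
lemma kdvFlux_self : kdvFlux L w w₁ w₂ L = 0 := by
  simp [kdvFlux]

lemma kdvFlux_zero (h0 : w 0 = 0) : kdvFlux L w w₁ w₂ 0 = w₁ 0 ^ 2 / (2 * L) := by
  simp [kdvFlux, h0]
  ring

lemma abs_kdvFlux_le (hM : 0 ≤ M) (hx : x ∈ Icc 0 L) (h₀ : |w x| ≤ M * (L - x) ^ 2)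
    (h₁ : |w₁ x| ≤ M * (L - x)) (h₂ : |w₂ x| ≤ M) :
    |kdvFlux L w w₁ w₂ x| ≤ M ^ 2 * (4 + L ^ 2) * (L - x) := by
  rcases hx.2.eq_or_lt with rfl | hxL
  · simp [kdvFlux_self]
  have hd : 0 < L - x := sub_pos.2 hxL
  set u₀ := w x / (L - x) ^ 2
  set u₁ := w₁ x / (L - x)
  have hu₀ : |u₀| ≤ M := abs_div_le_of_abs_le_mul (by positivity) hM h₀
  have hu₁ : |u₁| ≤ M := abs_div_le_of_abs_le_mul hd.le hM h₁
  have hfactor : kdvFlux L w w₁ w₂ x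
      = (L - x) * (-(w₂ x * u₀) + u₁ ^ 2 / 2 + u₁ * u₀ - u₀ ^ 2 - (L - x) ^ 2 * u₀ ^ 2 / 2) := by
    unfold kdvFlux u₀ u₁
    field_simp
    ring
  have h₂u₀ : |w₂ x * u₀| ≤ M ^ 2 := by rw [abs_mul, sq]; gcongr
  have hu₁u₀ : |u₁ * u₀| ≤ M ^ 2 := by rw [abs_mul, sq]; gcongr
  have hu₀u₀ : u₀ ^ 2 ≤ M ^ 2 := sq_le_sq' (abs_le.1 hu₀).1 (abs_le.1 hu₀).2
  have hu₁u₁ : u₁ ^ 2 ≤ M ^ 2 := sq_le_sq' (abs_le.1 hu₁).1 (abs_le.1 hu₁).2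
  have hdu₀ : (L - x) ^ 2 * u₀ ^ 2 ≤ L ^ 2 * M ^ 2 := by gcongr; linarith [hx.1]
  rw [hfactor, abs_mul, abs_of_pos hd, mul_comm]
  gcongr
  rw [abs_le]
  constructor <;> linarith [abs_le.1 h₂u₀, abs_le.1 hu₁u₀, sq_nonneg u₀, sq_nonneg u₁,
    mul_nonneg (sq_nonneg (L - x)) (sq_nonneg u₀)]

lemma continuousOn_kdvFlux (hw : Continuous w) (hw₁ : Continuous w₁) (hw₂ : Continuous w₂)
    (hM : 0 ≤ M) (h₀ : ∀ x ∈ Icc 0 L, |w x| ≤ M * (L - x) ^ 2)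
    (h₁ : ∀ x ∈ Icc 0 L, |w₁ x| ≤ M * (L - x)) (h₂ : ∀ x ∈ Icc 0 L, |w₂ x| ≤ M) :
    ContinuousOn (kdvFlux L w w₁ w₂) (Icc 0 L) := by
  intro x hx
  rcases hx.2.eq_or_lt with rfl | hxL
  · rw [ContinuousWithinAt, kdvFlux_self]
    refine squeeze_zero_norm' (a := fun y => M ^ 2 * (4 + x ^ 2) * (x - y)) ?_ ?_
    · filter_upwards [self_mem_nhdsWithin] with y hy
      exact abs_kdvFlux_le hM hy (h₀ y hy) (h₁ y hy) (h₂ y hy)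
    · have : Continuous fun y => M ^ 2 * (4 + x ^ 2) * (x - y) := by fun_prop
      exact (this.tendsto' x 0 (by simp)).mono_left nhdsWithin_le_nhds
  · have hd : L - x ≠ 0 := sub_ne_zero.2 hxL.ne'
    exact ContinuousAt.continuousWithinAt (by unfold kdvFlux; fun_prop (disch := positivity))

theorem integral_kdv_eq_of_abs_le (hL : 0 < L) (hM : 0 ≤ M) (hw : ∀ x, HasDerivAt w (w₁ x) x)
    (hw₁ : ∀ x, HasDerivAt w₁ (w₂ x) x) (hw₂ : ∀ x, HasDerivAt w₂ (w₃ x) x)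
    (hw₃ : Continuous w₃) (h₀ : ∀ x ∈ Icc 0 L, |w x| ≤ M * (L - x) ^ 2)
    (h₁ : ∀ x ∈ Icc 0 L, |w₁ x| ≤ M * (L - x)) (h₂ : ∀ x ∈ Icc 0 L, |w₂ x| ≤ M)
    (h0 : w 0 = 0) :
    ∫ x in 0..L, (-w₃ x - w₁ x) * (w x / (L - x)) =
      -(3 / 2) * (∫ x in 0..L, w₁ x ^ 2 / (L - x) ^ 2) + 3 * (∫ x in 0..L, w x ^ 2 / (L - x) ^ 4)
        + 1 / 2 * (∫ x in 0..L, w x ^ 2 / (L - x) ^ 2) - w₁ 0 ^ 2 / (2 * L) := by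
  have hc : Continuous w := continuous_iff_continuousAt.2 fun x => (hw x).continuousAt
  have hc₁ : Continuous w₁ := continuous_iff_continuousAt.2 fun x => (hw₁ x).continuousAt
  have hc₂ : Continuous w₂ := continuous_iff_continuousAt.2 fun x => (hw₂ x).continuousAt
  have h₀' : ∀ x ∈ Icc 0 L, |w x| ≤ M * L * (L - x) ^ 1 := fun x hx => (h₀ x hx).trans <| by
    rw [sq, pow_one, ← mul_assoc]; gcongr; exacts [sub_nonneg.2 hx.2, by linarith [hx.1]]
  have hI₁ := intervalIntegrable_sq_div_pow_of_abs_le 1 hL.le hc₁.measurable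
    fun x hx => (pow_one (L - x)).symm ▸ h₁ x hx
  have hI₂ := intervalIntegrable_sq_div_pow_of_abs_le 2 hL.le hc.measurable h₀
  have hI₃ := intervalIntegrable_sq_div_pow_of_abs_le 1 hL.le hc.measurable h₀'
  have hIA := ((intervalIntegrable_div_pow_of_abs_le 1 hL.le hc.measurable (by positivity)
    h₀').continuousOn_mul (hw₃.neg.sub hc₁).continuousOn)
  simp only [Nat.reduceMul, pow_one, Pi.sub_apply, Pi.neg_apply] at hI₁ hI₂ hI₃ hIA
  have hIB := ((hI₁.const_mul (-(3 / 2))).add (hI₂.const_mul 3)).add (hI₃.const_mul (1 / 2))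
  have hFTC := integral_eq_sub_of_hasDerivAt_of_le hL.le
    (continuousOn_kdvFlux hc hc₁ hc₂ hM h₀ h₁ h₂)
    (fun x hx => hasDerivAt_kdvFlux (hw x) (hw₁ x) (hw₂ x) hx.2.ne) (hIA.sub hIB)
  rw [integral_sub hIA hIB, integral_add ((hI₁.const_mul _).add (hI₂.const_mul _))
    (hI₃.const_mul _), integral_add (hI₁.const_mul _) (hI₂.const_mul _),
    intervalIntegral.integral_const_mul, intervalIntegral.integral_const_mul,
    intervalIntegral.integral_const_mul, kdvFlux_self, kdvFlux_zero h0] at hFTC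
  linarith

end KdVFlux

/-- Dissipativity identity for the KdV operator in the weighted space:
for `L > 0` and `w ∈ C³([0,L])` with `w(0) = w(L) = 0` and `w'(L) = 0`,
`∫₀^L (−w''' − w') · w/(L−x) dx
  = −(3/2)∫₀^L w'²/(L−x)² dx + 3∫₀^L w²/(L−x)⁴ dx + (1/2)∫₀^L w²/(L−x)² dx − w'(0)²/(2L)`. -/
theorem stmt_13 (L : ℝ) (hL : 0 < L) (w : ℝ → ℝ) (hw : ContDiff ℝ 3 w)
    (h0 : w 0 = 0) (hLval : w L = 0) (hL' : deriv w L = 0) :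
    (∫ x in (0:ℝ)..L, (-(deriv (deriv (deriv w)) x) - deriv w x) * (w x / (L - x))) =
      -(3 / 2) * (∫ x in (0:ℝ)..L, (deriv w x) ^ 2 / (L - x) ^ 2)
        + 3 * (∫ x in (0:ℝ)..L, (w x) ^ 2 / (L - x) ^ 4)
        + (1 / 2) * (∫ x in (0:ℝ)..L, (w x) ^ 2 / (L - x) ^ 2)
        - (deriv w 0) ^ 2 / (2 * L) := by
  have hw₁ : ContDiff ℝ 2 (deriv w) := hw.deriv'
  have hw₂ : ContDiff ℝ 1 (deriv (deriv w)) := hw₁.deriv'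
  obtain ⟨M, hM⟩ := (isCompact_Icc (a := 0) (b := L)).exists_bound_of_continuousOn
    hw₂.continuous.continuousOn
  have h₂ : ∀ x ∈ Icc 0 L, |deriv (deriv w) x| ≤ M := hM
  have h₁ : ∀ x ∈ Icc 0 L, |deriv w x| ≤ M * (L - x) := fun x hx =>
    abs_le_mul_sub_of_abs_deriv_le (hw₁.differentiable two_ne_zero) hL' hx.2
      fun t ht => h₂ t ⟨hx.1.trans ht.1, ht.2⟩
  have hM0 : 0 ≤ M := (abs_nonneg _).trans (h₂ 0 ⟨le_rfl, hL.le⟩)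
  exact integral_kdv_eq_of_abs_le hL hM0
    (fun x => (hw.differentiable three_ne_zero x).hasDerivAt)
    (fun x => (hw₁.differentiable two_ne_zero x).hasDerivAt)
    (fun x => (hw₂.differentiable one_ne_zero x).hasDerivAt) (hw₂.continuous_deriv le_rfl)
    (fun x hx =>
      abs_le_mul_sub_sq_of_abs_deriv_le hM0 (hw.differentiable three_ne_zero) hLval h₁ hx)
    h₁ h₂ h0
end
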